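/- arXiv:2605.14800 — 7 statements merged into one kernel-verified Lean document; each statement's English description precedes it below -/
import Mathlib

section
/- Let f_1, …, f_B : ℝ^d → ℝ be differentiable functions, each convex and (𝓛0,𝓛1)-smooth, all attaining their minimum at a common point x*. Then for every x ∈ ℝ^d, the averaged gradient g := (1/B)Σ_{i=1}^B ∇f_i(x) satisfies ‖g‖² ≤ 2(𝓛0 + 𝓛1‖g‖)·⟨g, x − x*⟩. -/
/-! For one function, a gradient step of length `(𝓛0 + 𝓛1‖∇f(x)‖)⁻¹` stays in the region where
the smoothness bound holds, and since `x*` minimizes `f` it yields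
`‖∇f(x)‖² ≤ 2(𝓛0 + 𝓛1‖∇f(x)‖)(f(x) - f(x*))`; convexity bounds the gap `f(x) - f(x*)` by
`⟨∇f(x), x - x*⟩`. So every gradient lies in `{v | ‖v‖² ≤ 2(𝓛0 + 𝓛1‖v‖)⟨v, x - x*⟩}`, and this set
is convex: writing the condition as `‖v‖² / (𝓛0 + 𝓛1‖v‖) ≤ 2⟨v, x - x*⟩`, Cauchy–Schwarz gives
it for `a‖u‖ + b‖v‖` in place of `‖a • u + b • v‖`, and `t ↦ t² / (𝓛0 + 𝓛1 t)` is increasing.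
Hence the averaged gradient lies in it too. -/

open scoped RealInnerProductSpace

theorem sq_le_two_mul_mul_of_le {L0 L1 r ρ P : ℝ} (hL0 : 0 ≤ L0) (hL1 : 0 ≤ L1)
    (hr : 0 ≤ r) (hrρ : r ≤ ρ) (hP : 0 ≤ P) (hρ : ρ ^ 2 ≤ 2 * (L0 + L1 * ρ) * P) :
    r ^ 2 ≤ 2 * (L0 + L1 * r) * P := by
  have hρ0 : 0 ≤ ρ := hr.trans hrρ
  rcases (show 0 ≤ L0 + L1 * ρ by positivity).eq_or_lt with hM | hM
  · have hρ : ρ = 0 := by nlinarith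
    have hr : r = 0 := by linarith
    rw [hr]
    nlinarith [mul_nonneg hL0 hP]
  · have hmono : r ^ 2 * (L0 + L1 * ρ) ≤ ρ ^ 2 * (L0 + L1 * r) := by
      nlinarith [mul_nonneg (mul_nonneg hL1 hr) (sub_nonneg.2 hrρ),
        mul_nonneg hL0 (sub_nonneg.2 hrρ)]
    refine le_of_mul_le_mul_right ?_ hM
    calc r ^ 2 * (L0 + L1 * ρ) ≤ ρ ^ 2 * (L0 + L1 * r) := hmono
      _ ≤ 2 * (L0 + L1 * ρ) * P * (L0 + L1 * r) := by gcongr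
      _ = 2 * (L0 + L1 * r) * P * (L0 + L1 * ρ) := by ring

theorem add_sq_le_add_mul_add {x y M N p q : ℝ} (hM : 0 ≤ M) (hN : 0 ≤ N) (hp : 0 ≤ p)
    (hq : 0 ≤ q) (hx : x ^ 2 ≤ M * p) (hy : y ^ 2 ≤ N * q) :
    (x + y) ^ 2 ≤ (M + N) * (p + q) := by
  simpa [Fin.sum_univ_two] using Finset.sum_sq_le_sum_mul_sum_of_sq_le_mul Finset.univ
    (r := ![x, y]) (f := ![M, N]) (g := ![p, q]) (by simp [Fin.forall_fin_two, hM, hN])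
    (by simp [Fin.forall_fin_two, hp, hq]) (by simp [Fin.forall_fin_two, hx, hy])

variable {E : Type*} [NormedAddCommGroup E] [InnerProductSpace ℝ E]

def selfBoundingSet (L0 L1 : ℝ) (w : E) : Set E :=
  {v | ‖v‖ ^ 2 ≤ 2 * (L0 + L1 * ‖v‖) * ⟪v, w⟫}

section selfBoundingSet

variable {L0 L1 : ℝ} {w : E}

theorem inner_nonneg_of_mem_selfBoundingSet (hL0 : 0 ≤ L0) (hL1 : 0 ≤ L1) {v : E}
    (hv : v ∈ selfBoundingSet L0 L1 w) : 0 ≤ ⟪v, w⟫ := by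
  rcases eq_or_ne v 0 with rfl | hv0
  · simp
  · have hpos : 0 < ‖v‖ ^ 2 := by positivity
    by_contra! hneg
    have : 2 * (L0 + L1 * ‖v‖) * ⟪v, w⟫ ≤ 0 :=
      mul_nonpos_of_nonneg_of_nonpos (by positivity) hneg.le
    exact (hpos.trans_le (hv.trans this)).false

theorem convex_selfBoundingSet (hL0 : 0 ≤ L0) (hL1 : 0 ≤ L1) :
    Convex ℝ (selfBoundingSet L0 L1 w) := by
  intro u hu v hv a b ha hb hab
  have hpu := inner_nonneg_of_mem_selfBoundingSet hL0 hL1 hu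
  have hpv := inner_nonneg_of_mem_selfBoundingSet hL0 hL1 hv
  have hρ : (a * ‖u‖ + b * ‖v‖) ^ 2 ≤
      2 * (L0 + L1 * (a * ‖u‖ + b * ‖v‖)) * ⟪a • u + b • v, w⟫ := by
    have hu' : (a * ‖u‖) ^ 2 ≤ (a * (L0 + L1 * ‖u‖)) * (a * (2 * ⟪u, w⟫)) := by
      have : a ^ 2 * ‖u‖ ^ 2 ≤ a ^ 2 * (2 * (L0 + L1 * ‖u‖) * ⟪u, w⟫) := by gcongr; exact hu
      linarith
    have hv' : (b * ‖v‖) ^ 2 ≤ (b * (L0 + L1 * ‖v‖)) * (b * (2 * ⟪v, w⟫)) := by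
      have : b ^ 2 * ‖v‖ ^ 2 ≤ b ^ 2 * (2 * (L0 + L1 * ‖v‖) * ⟪v, w⟫) := by gcongr; exact hv
      linarith
    have := add_sq_le_add_mul_add (by positivity) (by positivity) (by positivity)
      (by positivity) hu' hv'
    rw [inner_add_left, real_inner_smul_left, real_inner_smul_left]
    convert this using 1
    obtain rfl : b = 1 - a := by linarith
    ring
  refine sq_le_two_mul_mul_of_le hL0 hL1 (norm_nonneg _) ?_ ?_ hρ
  · calc ‖a • u + b • v‖ ≤ ‖a • u‖ + ‖b • v‖ := norm_add_le _ _
      _ = a * ‖u‖ + b * ‖v‖ := by rw [norm_smul_of_nonneg ha, norm_smul_of_nonneg hb]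
  · rw [inner_add_left, real_inner_smul_left, real_inner_smul_left]
    positivity

end selfBoundingSet

section smooth

variable {h : E → ℝ} {x xstar v : E} {L0 L1 : ℝ}

theorem mul_norm_sq_sub_le_of_smooth
    (hsmooth : ∀ y, L1 * ‖y - x‖ ≤ 1 →
      h y ≤ h x + ⟪v, y - x⟫ + (L0 + L1 * ‖v‖) / 2 * ‖y - x‖ ^ 2)
    (hmin : ∀ y, h xstar ≤ h y) (t : ℝ) (ht : 0 ≤ t) (hstep : L1 * (t * ‖v‖) ≤ 1) :
    t * ‖v‖ ^ 2 - (L0 + L1 * ‖v‖) / 2 * (t * ‖v‖) ^ 2 ≤ h x - h xstar := by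
  have hdisp : x - t • v - x = -(t • v) := by abel
  have hnorm : ‖x - t • v - x‖ = t * ‖v‖ := by rw [hdisp, norm_neg, norm_smul_of_nonneg ht]
  have hinner : ⟪v, x - t • v - x⟫ = -(t * ‖v‖ ^ 2) := by
    rw [hdisp, inner_neg_right, real_inner_smul_right, real_inner_self_eq_norm_sq]
  have := hsmooth (x - t • v) (by rwa [hnorm])
  rw [hnorm, hinner] at this
  linarith [hmin (x - t • v)]

theorem norm_sq_le_of_smooth (hL0 : 0 ≤ L0) (hL1 : 0 ≤ L1)
    (hsmooth : ∀ y, L1 * ‖y - x‖ ≤ 1 →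
      h y ≤ h x + ⟪v, y - x⟫ + (L0 + L1 * ‖v‖) / 2 * ‖y - x‖ ^ 2)
    (hmin : ∀ y, h xstar ≤ h y) :
    ‖v‖ ^ 2 ≤ 2 * (L0 + L1 * ‖v‖) * (h x - h xstar) := by
  have hstep := mul_norm_sq_sub_le_of_smooth hsmooth hmin
  set M := L0 + L1 * ‖v‖
  rcases (show 0 ≤ M by positivity).eq_or_lt with hM0 | hMpos
  · -- the smoothness bound is then global and linear, so `h` is unbounded below along `-v`
    have hL1v : L1 * ‖v‖ = 0 := by nlinarith [mul_nonneg hL1 (norm_nonneg v)]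
    have hv : ‖v‖ = 0 := by
      by_contra hv
      have hpos : 0 < ‖v‖ ^ 2 := by positivity
      have := hstep ((h x - h xstar + 1) / ‖v‖ ^ 2) (div_nonneg (by linarith [hmin x]) hpos.le)
        (by rw [mul_left_comm, hL1v, mul_zero]; exact zero_le_one)
      rw [← hM0, div_mul_cancel₀ _ hpos.ne'] at this
      linarith
    rw [hv, ← hM0]
    simp
  · have := hstep M⁻¹ (by positivity) (by
      rw [← mul_assoc, mul_comm L1, mul_assoc, inv_mul_le_one₀ hMpos]
      linarith)
    calc ‖v‖ ^ 2 = 2 * M * (M⁻¹ * ‖v‖ ^ 2 - M / 2 * (M⁻¹ * ‖v‖) ^ 2) := by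
          field_simp
          ring
      _ ≤ 2 * M * (h x - h xstar) := by gcongr

theorem mem_selfBoundingSet_of_convex_of_smooth (hL0 : 0 ≤ L0) (hL1 : 0 ≤ L1)
    (hsmooth : ∀ y, L1 * ‖y - x‖ ≤ 1 →
      h y ≤ h x + ⟪v, y - x⟫ + (L0 + L1 * ‖v‖) / 2 * ‖y - x‖ ^ 2)
    (hmin : ∀ y, h xstar ≤ h y) (hconvex : h x + ⟪v, xstar - x⟫ ≤ h xstar) :
    v ∈ selfBoundingSet L0 L1 (x - xstar) := by
  have hgap : h x - h xstar ≤ ⟪v, x - xstar⟫ := by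
    rw [← neg_sub xstar x, inner_neg_right]
    linarith
  exact (norm_sq_le_of_smooth hL0 hL1 hsmooth hmin).trans (by gcongr)

end smooth

theorem avg_grad_self_bounding_general
    {d B : ℕ} (L0 L1 : ℝ)
    (f : Fin B → EuclideanSpace ℝ (Fin d) → ℝ)
    (g : Fin B → EuclideanSpace ℝ (Fin d) → EuclideanSpace ℝ (Fin d))
    (xstar : EuclideanSpace ℝ (Fin d))
    (hL0 : 0 ≤ L0) (hL1 : 0 ≤ L1)
    -- each `f i` is convex
    (hconvex : ∀ i (y z : EuclideanSpace ℝ (Fin d)),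
      f i y + ⟪g i y, z - y⟫ ≤ f i z)
    -- each `f i` is `(𝓛0,𝓛1)`-smooth
    (hsmooth : ∀ i (y z : EuclideanSpace ℝ (Fin d)), L1 * ‖y - z‖ ≤ 1 →
      f i y ≤ f i z + ⟪g i z, y - z⟫ + (L0 + L1 * ‖g i z‖) / 2 * ‖y - z‖ ^ 2)
    -- common minimizer (interpolation)
    (hmin : ∀ i y, f i xstar ≤ f i y) :
    ∀ x : EuclideanSpace ℝ (Fin d),
      ‖(B : ℝ)⁻¹ • ∑ i, g i x‖ ^ 2 ≤
        2 * (L0 + L1 * ‖(B : ℝ)⁻¹ • ∑ i, g i x‖) *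
          ⟪(B : ℝ)⁻¹ • ∑ i, g i x, x - xstar⟫ := by
  intro x
  have hmem : ∀ i, g i x ∈ selfBoundingSet L0 L1 (x - xstar) := fun i =>
    mem_selfBoundingSet_of_convex_of_smooth hL0 hL1 (hsmooth i · x) (hmin i) (hconvex i x xstar)
  rcases Nat.eq_zero_or_pos B with rfl | hB
  · simp
  · have hB' : (B : ℝ) ≠ 0 := by positivity
    have := (convex_selfBoundingSet hL0 hL1).sum_mem (t := Finset.univ)
      (w := fun _ => (B : ℝ)⁻¹) (fun _ _ => by positivity)
      (by simp [hB']) (fun i _ => hmem i)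
    rwa [← Finset.smul_sum] at this

/-- If `f_1, …, f_B` are differentiable, convex and
`(𝓛0,𝓛1)`-smooth with a common minimizer `x*`, then the averaged gradient
`g = (1/B) Σ ∇f_i(x)` satisfies `‖g‖² ≤ 2(𝓛0 + 𝓛1‖g‖)⟨g, x - x*⟩`. -/
theorem avg_grad_self_bounding
    {d B : ℕ} (L0 L1 : ℝ)
    (f : Fin B → EuclideanSpace ℝ (Fin d) → ℝ)
    (g : Fin B → EuclideanSpace ℝ (Fin d) → EuclideanSpace ℝ (Fin d))
    (xstar : EuclideanSpace ℝ (Fin d))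
    (hL0 : 0 ≤ L0) (hL1 : 0 ≤ L1)
    (hgrad : ∀ i y, HasGradientAt (f i) (g i y) y)
    -- each `f i` is convex
    (hconvex : ∀ i (y z : EuclideanSpace ℝ (Fin d)),
      f i y + ⟪g i y, z - y⟫ ≤ f i z)
    -- each `f i` is `(𝓛0,𝓛1)`-smooth
    (hsmooth : ∀ i (y z : EuclideanSpace ℝ (Fin d)), L1 * ‖y - z‖ ≤ 1 →
      f i y ≤ f i z + ⟪g i z, y - z⟫ + (L0 + L1 * ‖g i z‖) / 2 * ‖y - z‖ ^ 2)
    -- common minimizer (interpolation)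
    (hmin : ∀ i y, f i xstar ≤ f i y) :
    ∀ x : EuclideanSpace ℝ (Fin d),
      ‖(B : ℝ)⁻¹ • ∑ i, g i x‖ ^ 2 ≤
        2 * (L0 + L1 * ‖(B : ℝ)⁻¹ • ∑ i, g i x‖) *
          ⟪(B : ℝ)⁻¹ • ∑ i, g i x, x - xstar⟫ :=
  avg_grad_self_bounding_general L0 L1 f g xstar hL0 hL1 hconvex hsmooth hmin
end

section
/- Let f_1, …, f_B : ℝ^d → ℝ be differentiable functions, each convex and (𝓛0,𝓛1)-smooth, all attaining their minimum at a common point x*. Let ρ ≥ 1, c > 0, and η ≤ 1/(9(𝓛0 + √ρ·𝓛1·c)). For any x ∈ ℝ^d, let g := (1/B)Σ_{i=1}^B ∇f_i(x) and x' := x − η·min{1, c/‖g‖}·g. Then ‖x' − x*‖ ≤ ‖x − x*‖. In particular, all ClipSGD iterates satisfy ‖x^k − x*‖ ≤ ‖x^0 − x*‖. -/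
open scoped RealInnerProductSpace

noncomputable section

/-- Clipping operator with radius `c`: `clip c g = min{1, c/‖g‖} • g`. -/
noncomputable def clip {E : Type*} [NormedAddCommGroup E] [NormedSpace ℝ E]
    (c : ℝ) (g : E) : E :=
  min 1 (c / ‖g‖) • g


private lemma key_lb {d : ℕ} (L0 L1 : ℝ) (f : EuclideanSpace ℝ (Fin d) → ℝ)
    (g : EuclideanSpace ℝ (Fin d) → EuclideanSpace ℝ (Fin d))
    (xstar x : EuclideanSpace ℝ (Fin d))
    (hL0 : 0 ≤ L0) (hL1 : 0 ≤ L1)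
    (hor : 0 < L0 ∨ 0 < L1)
    (hsmooth : ∀ (y z : EuclideanSpace ℝ (Fin d)), L1 * ‖y - z‖ ≤ 1 →
      f y ≤ f z + ⟪g z, y - z⟫ + (L0 + L1 * ‖g z‖) / 2 * ‖y - z‖ ^ 2)
    (hmin : ∀ y, f xstar ≤ f y) :
    ‖g x‖ ^ 2 / (2 * (L0 + L1 * ‖g x‖)) ≤ f x - f xstar := by
  by_cases hg : g x = 0
  · simp only [hg, norm_zero]
    simp only [ne_eq, OfNat.ofNat_ne_zero, not_false_eq_true, zero_pow, zero_div]
    linarith [hmin x]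
  have hag : 0 < ‖g x‖ := norm_pos_iff.2 hg
  have hDpos : 0 < L0 + L1 * ‖g x‖ := by
    rcases hor with h | h
    · nlinarith
    · nlinarith
  set s : ℝ := ‖g x‖ / (L0 + L1 * ‖g x‖) with hs
  have hs0 : 0 < s := div_pos hag hDpos
  set y : EuclideanSpace ℝ (Fin d) := x - s • (‖g x‖⁻¹ • g x) with hy
  have hyx : y - x = -(s • (‖g x‖⁻¹ • g x)) := by rw [hy]; abel
  have hnorm : ‖y - x‖ = s := by
    rw [hyx, norm_neg, norm_smul, norm_smul, norm_inv, norm_norm,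
      inv_mul_cancel₀ (ne_of_gt hag), mul_one, Real.norm_eq_abs, abs_of_pos hs0]
  have hcond : L1 * ‖y - x‖ ≤ 1 := by
    rw [hnorm, hs, mul_div_assoc', div_le_one hDpos]
    linarith
  have hinner : ⟪g x, y - x⟫ = -(s * ‖g x‖) := by
    rw [hyx, inner_neg_right, real_inner_smul_right, real_inner_smul_right,
      real_inner_self_eq_norm_sq]
    rw [show ‖g x‖⁻¹ * ‖g x‖ ^ 2 = ‖g x‖ by field_simp]
  have h1 := hsmooth y x hcond
  rw [hinner, hnorm] at h1
  have h2 := hmin y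
  have heq : s * ‖g x‖ - (L0 + L1 * ‖g x‖) / 2 * s ^ 2
      = ‖g x‖ ^ 2 / (2 * (L0 + L1 * ‖g x‖)) := by
    rw [hs]; field_simp; ring
  linarith

private lemma cs_sum {B : ℕ} (L0 L1 : ℝ) (a : Fin B → ℝ)
    (hD0 : ∀ i, L0 + L1 * a i = 0 → a i = 0)
    (hDnn : ∀ i, 0 ≤ L0 + L1 * a i) :
    (∑ i, a i) ^ 2 ≤ (∑ i, a i ^ 2 / (L0 + L1 * a i)) * (∑ i, (L0 + L1 * a i)) := by
  have key := Finset.sum_mul_sq_le_sq_mul_sq Finset.univ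
    (fun i => a i / Real.sqrt (L0 + L1 * a i)) (fun i => Real.sqrt (L0 + L1 * a i))
  calc (∑ i, a i) ^ 2
      = (∑ i, a i / Real.sqrt (L0 + L1 * a i) * Real.sqrt (L0 + L1 * a i)) ^ 2 := by
        congr 1
        refine Finset.sum_congr rfl fun i _ => ?_
        rcases eq_or_lt_of_le (hDnn i) with h | h
        · rw [hD0 i h.symm]; simp
        · rw [div_mul_cancel₀ _ (Real.sqrt_pos.2 h).ne']
    _ ≤ (∑ i, (a i / Real.sqrt (L0 + L1 * a i)) ^ 2)
        * (∑ i, (Real.sqrt (L0 + L1 * a i)) ^ 2) := key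
    _ = _ := by
        congr 1
        · refine Finset.sum_congr rfl fun i _ => ?_
          rw [div_pow, Real.sq_sqrt (hDnn i)]
        · exact Finset.sum_congr rfl fun i _ => Real.sq_sqrt (hDnn i)

set_option maxHeartbeats 1600000 in
private lemma clip_step {d B : ℕ} (L0 L1 ρ c η : ℝ)
    (f : Fin B → EuclideanSpace ℝ (Fin d) → ℝ)
    (g : Fin B → EuclideanSpace ℝ (Fin d) → EuclideanSpace ℝ (Fin d))
    (xstar : EuclideanSpace ℝ (Fin d))
    (hL0 : 0 ≤ L0) (hL1 : 0 ≤ L1) (hρ : 1 ≤ ρ)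
    (hc : 0 < c) (hη : 0 < η)
    (hηle : η ≤ 1 / (9 * (L0 + Real.sqrt ρ * L1 * c)))
    (hconvex : ∀ i (y z : EuclideanSpace ℝ (Fin d)),
      f i y + ⟪g i y, z - y⟫ ≤ f i z)
    (hsmooth : ∀ i (y z : EuclideanSpace ℝ (Fin d)), L1 * ‖y - z‖ ≤ 1 →
      f i y ≤ f i z + ⟪g i z, y - z⟫ + (L0 + L1 * ‖g i z‖) / 2 * ‖y - z‖ ^ 2)
    (hmin : ∀ i y, f i xstar ≤ f i y)
    (x : EuclideanSpace ℝ (Fin d)) :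
    ‖(x - η • clip c ((B : ℝ)⁻¹ • ∑ i, g i x)) - xstar‖ ≤ ‖x - xstar‖ := by
  set G : EuclideanSpace ℝ (Fin d) := (B : ℝ)⁻¹ • ∑ i, g i x with hG
  by_cases hG0 : G = 0
  · rw [hG0]; simp [clip]
  -- positivity of the smoothness scale
  have hsρ : 1 ≤ Real.sqrt ρ := by
    rw [show (1 : ℝ) = Real.sqrt 1 by simp]
    exact Real.sqrt_le_sqrt hρ
  have hKnn : 0 ≤ L0 + Real.sqrt ρ * L1 * c := by positivity
  have hpos : 0 < L0 + Real.sqrt ρ * L1 * c := by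
    rcases lt_or_eq_of_le hKnn with h | h
    · exact h
    · exfalso
      rw [← h] at hηle
      simp at hηle
      linarith
  have hη9 : η * (9 * (L0 + Real.sqrt ρ * L1 * c)) ≤ 1 :=
    (le_div_iff₀ (by positivity)).1 hηle
  have hor : 0 < L0 ∨ 0 < L1 := by
    by_contra hcon
    push_neg at hcon
    obtain ⟨h1, h2⟩ := hcon
    have e0 : L0 = 0 := le_antisymm h1 hL0
    have e1 : L1 = 0 := le_antisymm h2 hL1
    rw [e0, e1] at hpos
    simp at hpos
  have hB : 0 < (B : ℝ) := by
    rcases Nat.eq_zero_or_pos B with h | h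
    · exfalso; apply hG0; subst h; rw [hG]; simp
    · exact_mod_cast h
  have hGnorm : 0 < ‖G‖ := norm_pos_iff.2 hG0
  set t : ℝ := η * min 1 (c / ‖G‖) with ht
  have hmin1 : min 1 (c / ‖G‖) ≤ 1 := min_le_left _ _
  have hminpos : 0 < min 1 (c / ‖G‖) := lt_min one_pos (div_pos hc hGnorm)
  have ht0 : 0 < t := mul_pos hη hminpos
  have hstep : x - η • clip c G - xstar = (x - xstar) - t • G := by
    show x - η • (min 1 (c / ‖G‖) • G) - xstar = (x - xstar) - t • G
    rw [smul_smul, ← ht]; abel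
  -- per-term facts
  have hDnn : ∀ i : Fin B, 0 ≤ L0 + L1 * ‖g i x‖ :=
    fun i => add_nonneg hL0 (mul_nonneg hL1 (norm_nonneg _))
  have hDa : ∀ i : Fin B, L0 + L1 * ‖g i x‖ = 0 → ‖g i x‖ = 0 := by
    intro i h
    have hai : 0 ≤ ‖g i x‖ := norm_nonneg _
    have hla : L1 * ‖g i x‖ = 0 := by
      rcases hor with h0 | h1
      · nlinarith
      · nlinarith
    rcases mul_eq_zero.1 hla with h' | h'
    · rcases hor with h0 | h1
      · nlinarith
      · exact absurd h' (ne_of_gt h1)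
    · exact h'
  have hkey : ∀ i : Fin B,
      ‖g i x‖ ^ 2 / (2 * (L0 + L1 * ‖g i x‖)) ≤ f i x - f i xstar :=
    fun i => key_lb L0 L1 (f i) (g i) xstar x hL0 hL1 hor (hsmooth i) (hmin i)
  have hconv' : ∀ i : Fin B, f i x - f i xstar ≤ ⟪g i x, x - xstar⟫ := by
    intro i
    have h := hconvex i x xstar
    rw [show xstar - x = -(x - xstar) by abel, inner_neg_right] at h
    linarith
  -- sums
  set SA : ℝ := ∑ i, ‖g i x‖ with hSA
  set SQ : ℝ := ∑ i, ‖g i x‖ ^ 2 / (L0 + L1 * ‖g i x‖) with hSQ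
  set P : ℝ := ⟪G, x - xstar⟫ with hP
  have hsum1 : SQ / 2 ≤ ∑ i, ⟪g i x, x - xstar⟫ := by
    rw [hSQ, Finset.sum_div]
    refine le_trans (le_of_eq ?_) (Finset.sum_le_sum fun i _ =>
      le_trans (hkey i) (hconv' i))
    refine Finset.sum_congr rfl fun i _ => ?_
    rw [div_div]
    ring_nf
  have hbP : (B : ℝ) * P = ∑ i, ⟪g i x, x - xstar⟫ := by
    rw [hP, hG, real_inner_smul_left, sum_inner, ← mul_assoc,
      mul_inv_cancel₀ hB.ne', one_mul]
  have hSQle : SQ ≤ 2 * ((B : ℝ) * P) := by rw [hbP]; linarith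
  have hSQnn : 0 ≤ SQ :=
    Finset.sum_nonneg fun i _ => div_nonneg (sq_nonneg _) (hDnn i)
  have hcs : SA ^ 2 ≤ SQ * ((B : ℝ) * L0 + L1 * SA) := by
    have h := cs_sum L0 L1 (fun i => ‖g i x‖) hDa hDnn
    have hsumD : ∑ i : Fin B, (L0 + L1 * ‖g i x‖) = (B : ℝ) * L0 + L1 * SA := by
      rw [Finset.sum_add_distrib, Finset.sum_const, ← Finset.mul_sum,
        Finset.card_univ, Fintype.card_fin, nsmul_eq_mul, hSA]
    rw [hsumD] at h
    exact h
  have hGA : ‖G‖ ≤ (B : ℝ)⁻¹ * SA := by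
    rw [hG, norm_smul, norm_inv, Real.norm_natCast, hSA]
    exact mul_le_mul_of_nonneg_left (norm_sum_le _ _) (inv_nonneg.2 hB.le)
  set Abar : ℝ := (B : ℝ)⁻¹ * SA with hAbar
  have hApos : 0 < Abar := lt_of_lt_of_le hGnorm hGA
  have hDA : 0 < L0 + L1 * Abar := by
    rcases hor with h | h
    · nlinarith
    · nlinarith
  have hDG : 0 < L0 + L1 * ‖G‖ := by
    rcases hor with h | h
    · nlinarith
    · nlinarith
  have hSAeq : SA = (B : ℝ) * Abar := by
    rw [hAbar, ← mul_assoc, mul_inv_cancel₀ hB.ne', one_mul]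
  -- step 1 : Abar^2 ≤ 2 * P * (L0 + L1 * Abar)
  have step1 : Abar ^ 2 ≤ 2 * P * (L0 + L1 * Abar) := by
    rw [hSAeq] at hcs
    have hfac : (B : ℝ) * L0 + L1 * ((B : ℝ) * Abar) = (B : ℝ) * (L0 + L1 * Abar) := by
      ring
    rw [hfac] at hcs
    have hmul : SQ * ((B : ℝ) * (L0 + L1 * Abar))
        ≤ 2 * ((B : ℝ) * P) * ((B : ℝ) * (L0 + L1 * Abar)) :=
      mul_le_mul_of_nonneg_right hSQle (mul_nonneg hB.le hDA.le)
    have final : ((B : ℝ) * (B : ℝ)) * (Abar ^ 2)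
        ≤ ((B : ℝ) * (B : ℝ)) * (2 * P * (L0 + L1 * Abar)) := by linarith
    exact le_of_mul_le_mul_left final (mul_pos hB hB)
  -- t * (L0 + L1 * ‖G‖) ≤ 1
  have htη : t ≤ η := by nlinarith
  have htG : t * ‖G‖ ≤ η * c := by
    have h2 : min 1 (c / ‖G‖) * ‖G‖ ≤ c := by
      have := mul_le_mul_of_nonneg_right (min_le_right 1 (c / ‖G‖)) hGnorm.le
      rwa [div_mul_cancel₀ _ hGnorm.ne'] at this
    calc t * ‖G‖ = η * (min 1 (c / ‖G‖) * ‖G‖) := by rw [ht]; ring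
      _ ≤ η * c := by nlinarith
  have h1 : t * (L0 + L1 * ‖G‖) ≤ 1 := by
    have p1 : t * L0 ≤ η * L0 := mul_le_mul_of_nonneg_right htη hL0
    have p2 : L1 * (t * ‖G‖) ≤ L1 * (η * c) := mul_le_mul_of_nonneg_left htG hL1
    have p3 : η * (L1 * c) ≤ η * (Real.sqrt ρ * L1 * c) := by
      nlinarith [mul_nonneg (mul_nonneg hη.le hL1) hc.le]
    nlinarith
  -- chain
  have c1 : t * ‖G‖ ^ 2 ≤ ‖G‖ ^ 2 / (L0 + L1 * ‖G‖) := by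
    rw [le_div_iff₀ hDG]
    nlinarith [sq_nonneg ‖G‖]
  have c2 : ‖G‖ ^ 2 / (L0 + L1 * ‖G‖) ≤ Abar ^ 2 / (L0 + L1 * Abar) := by
    rw [div_le_div_iff₀ hDG hDA]
    nlinarith [mul_nonneg hL0 (mul_nonneg (sub_nonneg.2 hGA) (add_nonneg hApos.le (norm_nonneg G))),
      mul_nonneg hL1 (mul_nonneg (mul_nonneg hGnorm.le hApos.le) (sub_nonneg.2 hGA))]
  have c3 : Abar ^ 2 / (L0 + L1 * Abar) ≤ 2 * P := by
    rw [div_le_iff₀ hDA]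
    linarith
  have hmain : t * ‖G‖ ^ 2 ≤ 2 * P := le_trans c1 (le_trans c2 c3)
  have hmain2 : t ^ 2 * ‖G‖ ^ 2 ≤ 2 * t * P := by
    have := mul_le_mul_of_nonneg_left hmain ht0.le
    nlinarith
  rw [hstep]
  have e := norm_sub_sq_real (x - xstar) (t • G)
  rw [real_inner_smul_right, norm_smul, Real.norm_eq_abs, mul_pow, sq_abs,
    real_inner_comm] at e
  rw [hP] at hmain2
  have hsq : ‖(x - xstar) - t • G‖ ^ 2 ≤ ‖x - xstar‖ ^ 2 := by
    rw [e]
    linarith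
  calc ‖(x - xstar) - t • G‖ = Real.sqrt (‖(x - xstar) - t • G‖ ^ 2) := by
        rw [Real.sqrt_sq (norm_nonneg _)]
    _ ≤ Real.sqrt (‖x - xstar‖ ^ 2) := Real.sqrt_le_sqrt hsq
    _ = ‖x - xstar‖ := Real.sqrt_sq (norm_nonneg _)

/-- Monotone behavior of the distance to the optimum for
ClipSGD: under per-realization convexity, `(𝓛0,𝓛1)`-smoothness and a common
minimizer `x*`, one ClipSGD step with `η ≤ 1/(9(𝓛0 + √ρ 𝓛1 c))` does not
increase the distance to `x*`; in particular all ClipSGD iterates (with fresh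
mini-batches of functions sharing the minimizer `x*`) satisfy
`‖x^k - x*‖ ≤ ‖x^0 - x*‖`. -/
theorem clipSGD_distance_monotone
    {d B : ℕ} (L0 L1 ρ c η : ℝ)
    (f : Fin B → EuclideanSpace ℝ (Fin d) → ℝ)
    (g : Fin B → EuclideanSpace ℝ (Fin d) → EuclideanSpace ℝ (Fin d))
    (xstar : EuclideanSpace ℝ (Fin d))
    (hL0 : 0 ≤ L0) (hL1 : 0 ≤ L1) (hρ : 1 ≤ ρ)
    (hc : 0 < c) (hη : 0 < η)
    (hηle : η ≤ 1 / (9 * (L0 + Real.sqrt ρ * L1 * c)))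
    (hgrad : ∀ i y, HasGradientAt (f i) (g i y) y)
    (hconvex : ∀ i (y z : EuclideanSpace ℝ (Fin d)),
      f i y + ⟪g i y, z - y⟫ ≤ f i z)
    (hsmooth : ∀ i (y z : EuclideanSpace ℝ (Fin d)), L1 * ‖y - z‖ ≤ 1 →
      f i y ≤ f i z + ⟪g i z, y - z⟫ + (L0 + L1 * ‖g i z‖) / 2 * ‖y - z‖ ^ 2)
    (hmin : ∀ i y, f i xstar ≤ f i y) :
    -- one ClipSGD step does not increase the distance to `x*`
    (∀ x : EuclideanSpace ℝ (Fin d),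
      ‖(x - η • clip c ((B : ℝ)⁻¹ • ∑ i, g i x)) - xstar‖ ≤ ‖x - xstar‖) ∧
    -- in particular, all ClipSGD iterates (with fresh mini-batches sharing the
    -- common minimizer `x*`) stay within the initial distance of `x*`
    (∀ (F : ℕ → Fin B → EuclideanSpace ℝ (Fin d) → ℝ)
       (Gr : ℕ → Fin B → EuclideanSpace ℝ (Fin d) → EuclideanSpace ℝ (Fin d)),
      (∀ k i y, HasGradientAt (F k i) (Gr k i y) y) →
      (∀ k i (y z : EuclideanSpace ℝ (Fin d)),
        F k i y + ⟪Gr k i y, z - y⟫ ≤ F k i z) →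
      (∀ k i (y z : EuclideanSpace ℝ (Fin d)), L1 * ‖y - z‖ ≤ 1 →
        F k i y ≤ F k i z + ⟪Gr k i z, y - z⟫ +
          (L0 + L1 * ‖Gr k i z‖) / 2 * ‖y - z‖ ^ 2) →
      (∀ k i y, F k i xstar ≤ F k i y) →
      ∀ xs : ℕ → EuclideanSpace ℝ (Fin d),
        (∀ k, xs (k + 1) = xs k - η • clip c ((B : ℝ)⁻¹ • ∑ i, Gr k i (xs k))) →
        ∀ k, ‖xs k - xstar‖ ≤ ‖xs 0 - xstar‖) := by
  constructor
  · intro x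
    exact clip_step L0 L1 ρ c η f g xstar hL0 hL1 hρ hc hη hηle hconvex hsmooth hmin x
  · intro F Gr _ hconvF hsmF hminF xs hxs k
    induction k with
    | zero => exact le_rfl
    | succ n ih =>
      rw [hxs n]
      exact le_trans (clip_step L0 L1 ρ c η (F n) (Gr n) xstar hL0 hL1 hρ hc hη hηle
        (hconvF n) (hsmF n) (hminF n) (xs n)) ih

end
end

section
/- Let f_1, …, f_B : ℝ^d → ℝ be differentiable functions, each convex and (𝓛0,𝓛1)-smooth, all attaining their minimum at a common point x*. Let ρ ≥ 1, λ > 0, and η ≤ λ/(𝓛0 + √ρ·𝓛1·λ). For any x ∈ ℝ^d, let g := (1/B)Σ_{i=1}^B ∇f_i(x) and x' := x − η·g/(‖g‖ + λ). Then ‖x' − x*‖ ≤ ‖x − x*‖. In particular, all NSGD iterates satisfy ‖x^k − x*‖ ≤ ‖x^0 − x*‖. -/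
set_option maxHeartbeats 1000000


open scoped RealInnerProductSpace

noncomputable section

/-- Tangent-line inequality for the convex function `u ↦ u²/(L0+L1 u)`. -/
private lemma tangent_aux (L0 L1 u v : ℝ) (hL0 : 0 ≤ L0) (hL1 : 0 ≤ L1)
    (hu : 0 ≤ u) (hv : 0 < v) (hDv : 0 < L0 + L1 * v) :
    v ^ 2 / (L0 + L1 * v) + v * (2 * L0 + L1 * v) / (L0 + L1 * v) ^ 2 * (u - v)
      ≤ u ^ 2 / (L0 + L1 * u) := by
  rcases lt_or_ge 0 (L0 + L1 * u) with hDu | hDu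
  · have e1 : v ^ 2 / (L0 + L1 * v) + v * (2 * L0 + L1 * v) / (L0 + L1 * v) ^ 2 * (u - v)
        = (v ^ 2 * (L0 + L1 * v) + v * (2 * L0 + L1 * v) * (u - v)) / (L0 + L1 * v) ^ 2 := by
      field_simp
    rw [e1, div_le_div_iff₀ (by positivity) hDu]
    nlinarith [sq_nonneg (L0 * (u - v))]
  · have hDu0 : L0 + L1 * u = 0 :=
      le_antisymm hDu (by positivity)
    have hL00 : L0 = 0 := by nlinarith [mul_nonneg hL1 hu]
    have hu0 : u = 0 := by
      have hL1pos : 0 < L1 := by nlinarith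
      nlinarith
    subst hL00; subst hu0
    have hL1pos : 0 < L1 := by nlinarith
    have : v ^ 2 / (0 + L1 * v) + v * (2 * 0 + L1 * v) / (0 + L1 * v) ^ 2 * (0 - v) = 0 := by
      field_simp
      ring
    rw [this]
    simp

/-- Per-function bound: `‖∇f(x)‖²/(L0+L1‖∇f(x)‖) ≤ 2⟪∇f(x), x - x*⟫`. -/
private lemma perI_aux {E : Type*} [NormedAddCommGroup E] [InnerProductSpace ℝ E]
    (L0 L1 : ℝ) (hL0 : 0 ≤ L0) (hL1 : 0 ≤ L1)
    (f : E → ℝ) (gf : E → E) (xstar x : E)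
    (hconvex : ∀ y z : E, f y + ⟪gf y, z - y⟫ ≤ f z)
    (hsmooth : ∀ y z : E, L1 * ‖y - z‖ ≤ 1 →
      f y ≤ f z + ⟪gf z, y - z⟫ + (L0 + L1 * ‖gf z‖) / 2 * ‖y - z‖ ^ 2)
    (hmin : ∀ y, f xstar ≤ f y) :
    ‖gf x‖ ^ 2 / (L0 + L1 * ‖gf x‖) ≤ 2 * ⟪gf x, x - xstar⟫ := by
  set G := gf x with hGdef
  set u := ‖G‖ with hudef
  have hu : 0 ≤ u := norm_nonneg _
  have h1 : f x - f xstar ≤ ⟪G, x - xstar⟫ := by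
    have := hconvex x xstar
    have e : ⟪G, xstar - x⟫ = -⟪G, x - xstar⟫ := by
      rw [show xstar - x = -(x - xstar) by abel, inner_neg_right]
    rw [e] at this
    linarith
  have h0 : (0:ℝ) ≤ f x - f xstar := by linarith [hmin x]
  rcases le_or_gt (L0 + L1 * u) 0 with hD | hD
  · have : L0 + L1 * u = 0 := le_antisymm hD (by positivity)
    rw [this, div_zero]
    linarith
  · set s := (L0 + L1 * u)⁻¹ with hsdef
    have hs : 0 < s := inv_pos.mpr hD
    have hs1 : (L0 + L1 * u) * s = 1 := mul_inv_cancel₀ hD.ne'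
    set y := x - s • G with hydef
    have hyx : y - x = -(s • G) := by rw [hydef]; abel
    have hyn : ‖y - x‖ = s * u := by
      rw [hyx, norm_neg, norm_smul, Real.norm_eq_abs, abs_of_pos hs]
    have hcond : L1 * ‖y - x‖ ≤ 1 := by
      rw [hyn]
      nlinarith [mul_nonneg hL0 hs.le]
    have hsm := hsmooth y x hcond
    have einner : ⟪G, y - x⟫ = -(s * u ^ 2) := by
      rw [hyx, inner_neg_right, real_inner_smul_right, real_inner_self_eq_norm_sq]
    rw [einner, hyn] at hsm
    have h2 : f xstar ≤ f y := hmin y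
    -- f y ≤ f x - s u² + (L0+L1u)/2 (s u)² = f x - s u²/2
    have h3 : s * u ^ 2 / 2 ≤ f x - f xstar := by nlinarith
    rw [div_le_iff₀ hD]
    nlinarith

/-- One NSGD step does not increase the distance to the common minimizer. -/
private lemma onestep_aux {d B : ℕ} (L0 L1 lam η : ℝ)
    (f : Fin B → EuclideanSpace ℝ (Fin d) → ℝ)
    (g : Fin B → EuclideanSpace ℝ (Fin d) → EuclideanSpace ℝ (Fin d))
    (xstar : EuclideanSpace ℝ (Fin d))
    (hL0 : 0 ≤ L0) (hL1 : 0 ≤ L1) (hpos : 0 < L0 ∨ 0 < L1)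
    (hlam : 0 < lam) (hη : 0 < η)
    (hkey : ∀ w : ℝ, 0 ≤ w → η * (L0 + L1 * w) ≤ w + lam)
    (hconvex : ∀ i (y z : EuclideanSpace ℝ (Fin d)),
      f i y + ⟪g i y, z - y⟫ ≤ f i z)
    (hsmooth : ∀ i (y z : EuclideanSpace ℝ (Fin d)), L1 * ‖y - z‖ ≤ 1 →
      f i y ≤ f i z + ⟪g i z, y - z⟫ + (L0 + L1 * ‖g i z‖) / 2 * ‖y - z‖ ^ 2)
    (hmin : ∀ i y, f i xstar ≤ f i y)
    (x : EuclideanSpace ℝ (Fin d)) :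
    ‖(x - (η / (‖(B : ℝ)⁻¹ • ∑ i, g i x‖ + lam)) • ((B : ℝ)⁻¹ • ∑ i, g i x)) -
        xstar‖ ≤ ‖x - xstar‖ := by
  set S : EuclideanSpace ℝ (Fin d) := ∑ i, g i x with hSdef
  set G : EuclideanSpace ℝ (Fin d) := (B : ℝ)⁻¹ • S with hGdef
  by_cases h0 : G = 0
  · rw [h0]
    simp
  · have hB : 0 < B := by
      rcases Nat.eq_zero_or_pos B with h | h
      · exfalso; apply h0; subst h; simp [hGdef, hSdef]
      · exact h
    have hBR : (0:ℝ) < (B:ℝ) := by exact_mod_cast hB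
    set v := ‖G‖ with hvdef
    have hv : 0 < v := norm_pos_iff.mpr h0
    have hDv : 0 < L0 + L1 * v := by
      rcases hpos with h | h
      · nlinarith [mul_nonneg hL1 hv.le]
      · nlinarith
    set c := v * (2 * L0 + L1 * v) / (L0 + L1 * v) ^ 2 with hcdef
    have hc : 0 ≤ c := by positivity
    -- per-index bound combined with the tangent inequality
    have hstep : ∀ i : Fin B,
        v ^ 2 / (L0 + L1 * v) + c * (‖g i x‖ - v) ≤ 2 * ⟪g i x, x - xstar⟫ := by
      intro i
      exact le_trans
        (tangent_aux L0 L1 ‖g i x‖ v hL0 hL1 (norm_nonneg _) hv hDv)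
        (perI_aux L0 L1 hL0 hL1 (f i) (g i) xstar x (hconvex i) (hsmooth i) (hmin i))
    have hsum := Finset.sum_le_sum (s := Finset.univ) (fun i _ => hstep i)
    set SU := ∑ i, ‖g i x‖ with hSUdef
    set S2 := ∑ i, ⟪g i x, x - xstar⟫ with hS2def
    have hsumL : ∑ i : Fin B, (v ^ 2 / (L0 + L1 * v) + c * (‖g i x‖ - v))
        = (B : ℝ) * (v ^ 2 / (L0 + L1 * v)) + c * (SU - (B : ℝ) * v) := by
      rw [Finset.sum_add_distrib, Finset.sum_const, Finset.card_univ]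
      simp [hSUdef, Finset.mul_sum, Finset.sum_sub_distrib, mul_sub]
      ring
    have hsumR : ∑ i : Fin B, 2 * ⟪g i x, x - xstar⟫ = 2 * S2 := by
      rw [← Finset.mul_sum]
    rw [hsumL, hsumR] at hsum
    -- ‖S‖ ≤ SU and v = B⁻¹ ‖S‖
    have hMv : (B : ℝ) * v ≤ SU := by
      have h1 : v = (B:ℝ)⁻¹ * ‖S‖ := by
        rw [hvdef, hGdef, norm_smul, Real.norm_eq_abs, abs_of_pos (inv_pos.mpr hBR)]
      have h2 : ‖S‖ ≤ SU := norm_sum_le _ _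
      rw [h1]
      rw [← mul_assoc, mul_inv_cancel₀ hBR.ne', one_mul]
      exact h2
    have hGS : ⟪G, x - xstar⟫ = (B:ℝ)⁻¹ * S2 := by
      rw [hGdef, real_inner_smul_left, hS2def, hSdef, sum_inner]
    -- main inequality: v²/(L0+L1 v) ≤ 2 ⟪G, x-x*⟫
    have hmain : v ^ 2 / (L0 + L1 * v) ≤ 2 * ⟪G, x - xstar⟫ := by
      rw [hGS]
      have h1 : (B:ℝ) * (v ^ 2 / (L0 + L1 * v)) ≤ 2 * S2 := by
        nlinarith [mul_nonneg hc (sub_nonneg.mpr hMv)]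
      have h2 := mul_le_mul_of_nonneg_left h1 (inv_pos.mpr hBR).le
      rw [← mul_assoc, inv_mul_cancel₀ hBR.ne', one_mul] at h2
      linarith
    -- step size
    set t := η / (v + lam) with htdef
    have ht : 0 < t := div_pos hη (by linarith)
    have htv : t * v ^ 2 ≤ v ^ 2 / (L0 + L1 * v) := by
      rw [htdef, div_mul_eq_mul_div, div_le_div_iff₀ (by linarith) hDv]
      nlinarith [hkey v hv.le, sq_nonneg v]
    have hfin : t * v ^ 2 ≤ 2 * ⟪G, x - xstar⟫ := le_trans htv hmain
    -- expand the squared norm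
    have hre : x - t • G - xstar = (x - xstar) - t • G := by abel
    have hexp : ‖x - t • G - xstar‖ ^ 2
        = ‖x - xstar‖ ^ 2 - 2 * (t * ⟪G, x - xstar⟫) + t ^ 2 * v ^ 2 := by
      rw [hre, norm_sub_sq_real, real_inner_smul_right, real_inner_comm,
        norm_smul, Real.norm_eq_abs, abs_of_pos ht]
      ring
    have hsq : ‖x - t • G - xstar‖ ^ 2 ≤ ‖x - xstar‖ ^ 2 := by
      rw [hexp]
      nlinarith [mul_le_mul_of_nonneg_left hfin ht.le]
    nlinarith [norm_nonneg (x - t • G - xstar), norm_nonneg (x - xstar), hsq]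

/-- Monotone behavior of the distance to the optimum for
NSGD: under per-realization convexity, `(𝓛0,𝓛1)`-smoothness and a common
minimizer `x*`, one NSGD step with `λ > 0` and `η ≤ λ/(𝓛0 + √ρ 𝓛1 λ)` does not
increase the distance to `x*`; in particular all NSGD iterates (with fresh
mini-batches of functions sharing the minimizer `x*`) satisfy
`‖x^k - x*‖ ≤ ‖x^0 - x*‖`. -/
theorem NSGD_distance_monotone
    {d B : ℕ} (L0 L1 ρ lam η : ℝ)
    (f : Fin B → EuclideanSpace ℝ (Fin d) → ℝ)
    (g : Fin B → EuclideanSpace ℝ (Fin d) → EuclideanSpace ℝ (Fin d))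
    (xstar : EuclideanSpace ℝ (Fin d))
    (hL0 : 0 ≤ L0) (hL1 : 0 ≤ L1) (hρ : 1 ≤ ρ)
    (hlam : 0 < lam) (hη : 0 < η)
    (hηle : η ≤ lam / (L0 + Real.sqrt ρ * L1 * lam))
    (hgrad : ∀ i y, HasGradientAt (f i) (g i y) y)
    (hconvex : ∀ i (y z : EuclideanSpace ℝ (Fin d)),
      f i y + ⟪g i y, z - y⟫ ≤ f i z)
    (hsmooth : ∀ i (y z : EuclideanSpace ℝ (Fin d)), L1 * ‖y - z‖ ≤ 1 →
      f i y ≤ f i z + ⟪g i z, y - z⟫ + (L0 + L1 * ‖g i z‖) / 2 * ‖y - z‖ ^ 2)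
    (hmin : ∀ i y, f i xstar ≤ f i y) :
    -- one NSGD step does not increase the distance to `x*`
    (∀ x : EuclideanSpace ℝ (Fin d),
      ‖(x - (η / (‖(B : ℝ)⁻¹ • ∑ i, g i x‖ + lam)) • ((B : ℝ)⁻¹ • ∑ i, g i x)) -
          xstar‖ ≤ ‖x - xstar‖) ∧
    -- in particular, all NSGD iterates (with fresh mini-batches sharing the
    -- common minimizer `x*`) stay within the initial distance of `x*`
    (∀ (F : ℕ → Fin B → EuclideanSpace ℝ (Fin d) → ℝ)
       (Gr : ℕ → Fin B → EuclideanSpace ℝ (Fin d) → EuclideanSpace ℝ (Fin d)),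
      (∀ k i y, HasGradientAt (F k i) (Gr k i y) y) →
      (∀ k i (y z : EuclideanSpace ℝ (Fin d)),
        F k i y + ⟪Gr k i y, z - y⟫ ≤ F k i z) →
      (∀ k i (y z : EuclideanSpace ℝ (Fin d)), L1 * ‖y - z‖ ≤ 1 →
        F k i y ≤ F k i z + ⟪Gr k i z, y - z⟫ +
          (L0 + L1 * ‖Gr k i z‖) / 2 * ‖y - z‖ ^ 2) →
      (∀ k i y, F k i xstar ≤ F k i y) →
      ∀ xs : ℕ → EuclideanSpace ℝ (Fin d),
        (∀ k, xs (k + 1) = xs k -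
          (η / (‖(B : ℝ)⁻¹ • ∑ i, Gr k i (xs k)‖ + lam)) •
            ((B : ℝ)⁻¹ • ∑ i, Gr k i (xs k))) →
        ∀ k, ‖xs k - xstar‖ ≤ ‖xs 0 - xstar‖) := by
  have hsq : 1 ≤ Real.sqrt ρ := by
    rw [show (1:ℝ) = Real.sqrt 1 by simp]
    exact Real.sqrt_le_sqrt hρ
  have hsq' : 0 ≤ Real.sqrt ρ := by linarith
  have hnn : 0 ≤ L0 + Real.sqrt ρ * L1 * lam := by positivity
  have hS : 0 < L0 + Real.sqrt ρ * L1 * lam := by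
    rcases lt_or_eq_of_le hnn with h | h
    · exact h
    · exfalso
      rw [← h, div_zero] at hηle
      linarith
  have hpos : 0 < L0 ∨ 0 < L1 := by
    by_cases h : 0 < L0
    · exact Or.inl h
    · right
      have hL00 : L0 = 0 := le_antisymm (not_lt.mp h) hL0
      rcases lt_or_eq_of_le hL1 with h1 | h1
      · exact h1
      · exfalso; rw [hL00, ← h1] at hS; simp at hS
  have hη' : η * (L0 + Real.sqrt ρ * L1 * lam) ≤ lam := by
    rw [le_div_iff₀ hS] at hηle
    exact hηle
  have hkey : ∀ w : ℝ, 0 ≤ w → η * (L0 + L1 * w) ≤ w + lam := by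
    intro w hw
    have hb1 : 0 ≤ η * (Real.sqrt ρ * L1 * lam) := by positivity
    have h1 : η * L0 ≤ lam := by nlinarith
    have hb2 : 0 ≤ η * L1 * lam * (Real.sqrt ρ - 1) :=
      mul_nonneg (by positivity) (by linarith)
    have h3 : η * L1 * lam ≤ lam := by nlinarith [mul_nonneg hη.le hL0]
    have h2 : η * L1 ≤ 1 := by nlinarith
    nlinarith [mul_le_mul_of_nonneg_right h2 hw]
  constructor
  · exact onestep_aux L0 L1 lam η f g xstar hL0 hL1 hpos hlam hη hkey hconvex hsmooth hmin
  · intro F Gr hg hc hs hm xs hrec k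
    induction k with
    | zero => exact le_refl _
    | succ k ih =>
      rw [hrec k]
      exact le_trans
        (onestep_aux L0 L1 lam η (F k) (Gr k) xstar hL0 hL1 hpos hlam hη hkey
          (hc k) (hs k) (hm k) (xs k)) ih

end
end

section
/- Suppose the gradient oracle is unbiased (E_ξ[∇f(x,ξ)] = ∇f(x) for all x), the interpolation condition holds, and for almost every ξ the realization f(·,ξ) is (𝓗0,𝓗1)-smooth with respect to its own infimum f_ξ* := inf_x f(x,ξ): for all x, y with ‖y − x‖ ≤ 1/√𝓗1, ‖∇f(y,ξ) − ∇f(x,ξ)‖ ≤ (𝓗0 + 𝓗1·(f(x,ξ) − f_ξ*))‖y − x‖. Then the expected objective f(x) = E_ξ[f(x,ξ)] is (H0,H1)-smooth with the same constants H0 = 𝓗0 and H1 = 𝓗1: for all x, y with ‖y − x‖ ≤ 1/√H1, ‖∇f(y) − ∇f(x)‖ ≤ (H0 + H1·(f(x) − f*))‖y − x‖, where f* = inf f. -/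
/-!
Interpolation makes the infimum of every realization equal to its value at the common minimizer
`xstar`, so the a.e. smoothness bound reads
`‖G z s - G y s‖ ≤ H0 ‖z - y‖ + H1 ‖z - y‖ (F s y - F s xstar)`, which is affine in `F s y - F s xstar`.
Averaging over `ξ` (unbiasedness and `‖∫ g‖ ≤ ∫ ‖g‖`) turns it into the same bound with the
gap `f y - f xstar = f y - inf f`.
-/

open MeasureTheory
open scoped RealInnerProductSpace

noncomputable section

theorem ciInf_eq_of_forall_le {ι α : Type*} [ConditionallyCompleteLattice α] {g : ι → α} {x : ι}
    (h : ∀ y, g x ≤ g y) : ⨅ y, g y = g x :=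
  haveI : Nonempty ι := ⟨x⟩
  (show IsLeast (Set.range g) (g x) from ⟨⟨x, rfl⟩, Set.forall_mem_range.2 h⟩).isGLB.ciInf_eq

theorem norm_integral_le_add_mul_integral_of_ae_norm_le {Ξ E : Type*} [MeasurableSpace Ξ]
    [NormedAddCommGroup E] [NormedSpace ℝ E] {μ : Measure Ξ} [IsProbabilityMeasure μ]
    {g : Ξ → E} {h : Ξ → ℝ} {a b : ℝ} (hh : Integrable h μ)
    (hle : ∀ᵐ s ∂μ, ‖g s‖ ≤ a + b * h s) :
    ‖∫ s, g s ∂μ‖ ≤ a + b * ∫ s, h s ∂μ := by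
  have hbh : Integrable (fun s => b * h s) μ := hh.const_mul b
  calc ‖∫ s, g s ∂μ‖ ≤ ∫ s, (a + b * h s) ∂μ :=
        norm_integral_le_of_norm_le ((integrable_const a).add hbh) hle
    _ = a + b * ∫ s, h s ∂μ := by
        rw [integral_add (integrable_const a) hbh, integral_const_mul, integral_const, probReal_univ,
          one_smul]

theorem expected_H0H1_smooth_general
    {d : ℕ} {Ξ : Type*} [MeasurableSpace Ξ]
    (D : Measure Ξ) [IsProbabilityMeasure D]
    (F : Ξ → EuclideanSpace ℝ (Fin d) → ℝ)
    (f : EuclideanSpace ℝ (Fin d) → ℝ)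
    (f' : EuclideanSpace ℝ (Fin d) → EuclideanSpace ℝ (Fin d))
    (G : EuclideanSpace ℝ (Fin d) → Ξ → EuclideanSpace ℝ (Fin d))
    (H0 H1 : ℝ)
    (xstar : EuclideanSpace ℝ (Fin d))
    -- `f` is the expectation of the realizations `F`
    (hf : ∀ y, f y = ∫ s, F s y ∂D)
    (hFint : ∀ y, Integrable (fun s => F s y) D)
    (hGint : ∀ y, Integrable (fun s => G y s) D)
    -- unbiased gradient oracle
    (hunbiased : ∀ y, ∫ s, G y s ∂D = f' y)
    -- `xstar` minimizes `f`, and interpolation holds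
    (hmin : ∀ y, f xstar ≤ f y)
    (hinterp : ∀ᵐ s ∂D, ∀ y, F s xstar ≤ F s y)
    -- a.e. realization is `(𝓗0,𝓗1)`-smooth w.r.t. its own infimum
    (hsmooth : ∀ᵐ s ∂D, ∀ y z : EuclideanSpace ℝ (Fin d),
      Real.sqrt H1 * ‖z - y‖ ≤ 1 →
      ‖G z s - G y s‖ ≤ (H0 + H1 * (F s y - ⨅ w, F s w)) * ‖z - y‖) :
    -- conclusion: `f` is `(H0,H1)`-smooth w.r.t. `f* = inf f`
    ∀ y z : EuclideanSpace ℝ (Fin d), Real.sqrt H1 * ‖z - y‖ ≤ 1 →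
      ‖f' z - f' y‖ ≤ (H0 + H1 * (f y - ⨅ w, f w)) * ‖z - y‖ := by
  intro y z hyz
  have hbound : ∀ᵐ s ∂D, ‖G z s - G y s‖ ≤
      H0 * ‖z - y‖ + H1 * ‖z - y‖ * (F s y - F s xstar) := by
    filter_upwards [hsmooth, hinterp] with s hs hi
    refine (hs y z hyz).trans_eq ?_
    rw [ciInf_eq_of_forall_le hi]
    ring
  have hgap : ∫ s, (F s y - F s xstar) ∂D = f y - f xstar := by
    rw [integral_sub (hFint y) (hFint xstar), hf, hf]
  calc ‖f' z - f' y‖ = ‖∫ s, (G z s - G y s) ∂D‖ := by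
        rw [integral_sub (hGint z) (hGint y), hunbiased, hunbiased]
    _ ≤ H0 * ‖z - y‖ + H1 * ‖z - y‖ * ∫ s, (F s y - F s xstar) ∂D :=
        norm_integral_le_add_mul_integral_of_ae_norm_le ((hFint y).sub (hFint xstar)) hbound
    _ = (H0 + H1 * (f y - ⨅ w, f w)) * ‖z - y‖ := by
        rw [hgap, ciInf_eq_of_forall_le hmin]
        ring

/-- If the gradient oracle is unbiased, the interpolation
condition holds, and a.e. realization `F(·,ξ)` is `(𝓗0,𝓗1)`-smooth with respect
to its own infimum, then the expected objective `f = E_ξ[F(·,ξ)]` is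
`(H0,H1)`-smooth with the same constants `H0 = 𝓗0`, `H1 = 𝓗1`, with respect to
`f* = inf f`. -/
theorem expected_H0H1_smooth
    {d : ℕ} {Ξ : Type*} [MeasurableSpace Ξ]
    (D : Measure Ξ) [IsProbabilityMeasure D]
    (F : Ξ → EuclideanSpace ℝ (Fin d) → ℝ)
    (f : EuclideanSpace ℝ (Fin d) → ℝ)
    (f' : EuclideanSpace ℝ (Fin d) → EuclideanSpace ℝ (Fin d))
    (G : EuclideanSpace ℝ (Fin d) → Ξ → EuclideanSpace ℝ (Fin d))
    (H0 H1 : ℝ)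
    (xstar : EuclideanSpace ℝ (Fin d))
    (hH0 : 0 ≤ H0) (hH1 : 0 ≤ H1)
    -- `f` is the expectation of the realizations `F`
    (hf : ∀ y, f y = ∫ s, F s y ∂D)
    (hFint : ∀ y, Integrable (fun s => F s y) D)
    (hgrad : ∀ y, HasGradientAt f (f' y) y)
    (hGgrad : ∀ᵐ s ∂D, ∀ y, HasGradientAt (F s) (G y s) y)
    (hGint : ∀ y, Integrable (fun s => G y s) D)
    -- unbiased gradient oracle
    (hunbiased : ∀ y, ∫ s, G y s ∂D = f' y)
    -- `xstar` minimizes `f`, and interpolation holds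
    (hmin : ∀ y, f xstar ≤ f y)
    (hinterp : ∀ᵐ s ∂D, ∀ y, F s xstar ≤ F s y)
    -- a.e. realization is `(𝓗0,𝓗1)`-smooth w.r.t. its own infimum
    (hsmooth : ∀ᵐ s ∂D, ∀ y z : EuclideanSpace ℝ (Fin d),
      Real.sqrt H1 * ‖z - y‖ ≤ 1 →
      ‖G z s - G y s‖ ≤ (H0 + H1 * (F s y - ⨅ w, F s w)) * ‖z - y‖) :
    -- conclusion: `f` is `(H0,H1)`-smooth w.r.t. `f* = inf f`
    ∀ y z : EuclideanSpace ℝ (Fin d), Real.sqrt H1 * ‖z - y‖ ≤ 1 →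
      ‖f' z - f' y‖ ≤ (H0 + H1 * (f y - ⨅ w, f w)) * ‖z - y‖ :=
  expected_H0H1_smooth_general D F f f' G H0 H1 xstar hf hFint hGint hunbiased hmin hinterp hsmooth

end
end

section
/- Let f : ℝ^d → ℝ be (H0,H1)-smooth with H0, H1 > 0 and f* := inf f > −∞. Then for every x ∈ ℝ^d, ‖∇f(x)‖ ≤ H0/(2√H1) + (3√H1/2)·(f(x) − f*). -/
open scoped RealInnerProductSpace

noncomputable section

/-!
Along a segment of length at most `1/√H1` from `x` the gradient is `L`-Lipschitz at `x` with
`L = H0 + H1 (f x - f*)`, so the descent lemma `f (x + h) ≤ f x + ⟪∇f x, h⟫ + L/2 ‖h‖²` holds there.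
Stepping the full length `1/√H1` against the gradient and using `f* ≤ f (x + h)` gives
`‖∇f x‖ / √H1 ≤ (f x - f*) + L / (2 H1)`, which rearranges to the claim.
-/

open Set

section

variable {E : Type*} [NormedAddCommGroup E] [InnerProductSpace ℝ E]

theorem HasGradientAt.hasDerivAt_comp_add_smul [CompleteSpace E] {f : E → ℝ} {g x h : E}
    {t : ℝ} (hf : HasGradientAt f g (x + t • h)) :
    HasDerivAt (fun t : ℝ => f (x + t • h)) ⟪g, h⟫ t := by
  have hline : HasDerivAt (fun t : ℝ => x + t • h) h t := by
    simpa using ((hasDerivAt_id t).smul_const h).const_add x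
  simpa [Function.comp_def] using hf.hasFDerivAt.comp_hasDerivAt t hline

theorem le_add_inner_add_sq_of_norm_gradient_sub_le [CompleteSpace E] {f : E → ℝ} {f' : E → E}
    {x h : E} {L : ℝ}
    (hgrad : ∀ y ∈ segment ℝ x (x + h), HasGradientAt f (f' y) y)
    (hlip : ∀ y ∈ segment ℝ x (x + h), ‖f' y - f' x‖ ≤ L * ‖y - x‖) :
    f (x + h) ≤ f x + ⟪f' x, h⟫ + L / 2 * ‖h‖ ^ 2 := by
  have hmem : ∀ t ∈ Icc (0 : ℝ) 1, x + t • h ∈ segment ℝ x (x + h) := fun t ht => by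
    rw [segment_eq_image']
    exact ⟨t, ht, by simp⟩
  set φ : ℝ → ℝ := fun t => f (x + t • h) - t * ⟪f' x, h⟫ - L / 2 * t ^ 2 * ‖h‖ ^ 2
  have hφ : ∀ t ∈ Icc (0 : ℝ) 1, HasDerivAt φ
      (⟪f' (x + t • h) - f' x, h⟫ - L * t * ‖h‖ ^ 2) t := fun t ht => by
    have hsum := (((hgrad _ (hmem t ht)).hasDerivAt_comp_add_smul.sub
      ((hasDerivAt_id t).mul_const ⟪f' x, h⟫)).sub
      (((hasDerivAt_pow 2 t).const_mul (L / 2)).mul_const (‖h‖ ^ 2)))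
    exact hsum.congr_deriv (by rw [inner_sub_left]; push_cast; ring)
  have hanti : AntitoneOn φ (Icc 0 1) := by
    refine antitoneOn_of_hasDerivWithinAt_nonpos (convex_Icc 0 1)
      (fun t ht => (hφ t ht).continuousAt.continuousWithinAt)
      (fun t ht => (hφ t (interior_subset ht)).hasDerivWithinAt) fun t ht => ?_
    rw [interior_Icc] at ht
    have hnorm : ‖x + t • h - x‖ = t * ‖h‖ := by
      rw [add_sub_cancel_left, norm_smul, Real.norm_of_nonneg ht.1.le]
    calc ⟪f' (x + t • h) - f' x, h⟫ - L * t * ‖h‖ ^ 2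
        ≤ ‖f' (x + t • h) - f' x‖ * ‖h‖ - L * t * ‖h‖ ^ 2 := by
          gcongr; exact real_inner_le_norm _ _
      _ ≤ L * ‖x + t • h - x‖ * ‖h‖ - L * t * ‖h‖ ^ 2 := by
          gcongr; exact hlip _ (hmem t (Ioo_subset_Icc_self ht))
      _ = 0 := by rw [hnorm]; ring
  have hends := hanti (left_mem_Icc.2 zero_le_one) (right_mem_Icc.2 zero_le_one) zero_le_one
  norm_num [φ] at hends
  linarith

theorem mul_norm_le_of_forall_le_add_inner {g : E} {a m r L : ℝ} (hr : 0 ≤ r) (hL : 0 ≤ L)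
    (hlower : ∀ h : E, ‖h‖ ≤ r → m ≤ a + ⟪g, h⟫ + L / 2 * ‖h‖ ^ 2) :
    r * ‖g‖ ≤ a - m + L / 2 * r ^ 2 := by
  rcases eq_or_ne g 0 with rfl | hg
  · have hm : m ≤ a := by simpa using hlower 0 (by simpa using hr)
    rw [norm_zero, mul_zero]
    nlinarith [mul_nonneg hL (sq_nonneg r)]
  · have hg' : 0 < ‖g‖ := norm_pos_iff.2 hg
    have hnorm : ‖-((r / ‖g‖) • g)‖ = r := by
      rw [norm_neg, norm_smul, Real.norm_of_nonneg (by positivity), div_mul_cancel₀ _ hg'.ne']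
    have hinner : ⟪g, -((r / ‖g‖) • g)⟫ = -(r * ‖g‖) := by
      rw [inner_neg_right, real_inner_smul_right, real_inner_self_eq_norm_sq]
      field_simp
    have hstep := hlower _ hnorm.le
    rw [hnorm, hinner] at hstep
    linarith

end

/-- If `f` is `(H0,H1)`-smooth with `H0, H1 > 0` and bounded
below, then `‖∇f(x)‖ ≤ H0/(2√H1) + (3√H1/2)(f(x) - f*)` for all `x`. -/
theorem grad_norm_bound_H0H1
    {d : ℕ}
    (f : EuclideanSpace ℝ (Fin d) → ℝ)
    (f' : EuclideanSpace ℝ (Fin d) → EuclideanSpace ℝ (Fin d))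
    (H0 H1 : ℝ)
    (hH0 : 0 < H0) (hH1 : 0 < H1)
    (hgrad : ∀ y, HasGradientAt f (f' y) y)
    (hbdd : BddBelow (Set.range f))
    (hsmooth : ∀ y z : EuclideanSpace ℝ (Fin d),
      Real.sqrt H1 * ‖z - y‖ ≤ 1 →
      ‖f' z - f' y‖ ≤ (H0 + H1 * (f y - ⨅ w, f w)) * ‖z - y‖) :
    ∀ x : EuclideanSpace ℝ (Fin d),
      ‖f' x‖ ≤ H0 / (2 * Real.sqrt H1) +
        3 * Real.sqrt H1 / 2 * (f x - ⨅ w, f w) := by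
  intro x
  set s := Real.sqrt H1
  set Δ := f x - ⨅ w, f w
  have hs : 0 < s := Real.sqrt_pos.2 hH1
  have hs2 : s ^ 2 = H1 := Real.sq_sqrt hH1.le
  have hΔ : 0 ≤ Δ := sub_nonneg.2 (ciInf_le hbdd x)
  have hdescent : ∀ h, ‖h‖ ≤ 1 / s →
      (⨅ w, f w) ≤ f x + ⟪f' x, h⟫ + (H0 + H1 * Δ) / 2 * ‖h‖ ^ 2 := fun h hh =>
    (ciInf_le hbdd (x + h)).trans <| le_add_inner_add_sq_of_norm_gradient_sub_le
      (fun y _ => hgrad y) fun y hy => hsmooth x y <| by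
        have : ‖y - x‖ ≤ ‖h‖ := by
          simpa [dist_eq_norm] using segment_subset_closedBall_left x (x + h) hy
        rw [le_div_iff₀ hs] at hh
        nlinarith
  have hstep := mul_norm_le_of_forall_le_add_inner (by positivity) (by positivity) hdescent
  calc ‖f' x‖ = s * (1 / s * ‖f' x‖) := by field_simp
    _ ≤ s * (Δ + (H0 + H1 * Δ) / 2 * (1 / s) ^ 2) := mul_le_mul_of_nonneg_left (by linarith) hs.le
    _ = H0 / (2 * s) + 3 * s / 2 * Δ := by rw [← hs2]; field_simp; ring

end
end

section
/- Let f : ℝ^d → ℝ be (H0,H1)-smooth with H0, H1 > 0 and f* := inf f > −∞, and run GD with warm-up step size η_k = θ·min{1/H0, 1/(3H1·F_k)}, F_k := f(x^k) − f*, with θ = 1/(4√2 + 4), for N iterations. Let M be the smallest index k ∈ {0,…,N−1} with F_k < H0/(3H1), with M = N if no such index exists. Then: (i) if M = 0, min_{0≤k≤N−1}‖∇f(x^k)‖ ≤ √(2·H0·F_0/(θ·N)); (ii) if 1 ≤ M ≤ N−1, min_{0≤k≤N−1}‖∇f(x^k)‖ ≤ min{ √(6·H1·F_0·(Σ_{k=0}^{M−1}F_k)/(θ·M²))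 , √(2·H0·F_0/(θ·(N−M))) }; (iii) if M = N, min_{0≤k≤N−1}‖∇f(x^k)‖ ≤ √(6·H1·F_0·(Σ_{k=0}^{N−1}F_k)/(θ·N²)). -/
/-!
Each warm-up step satisfies the descent inequality `F_{k+1} ≤ F_k - η_k / 2 ‖∇f(x^k)‖²`: the
`(H0,H1)`-smoothness bound applies along the whole step because `θ ≤ 3/8` and
`√H1 ‖∇f(x)‖ ≤ 2 (H0 + H1 F(x))` (a gradient step of length `1 / (√H1 ‖∇f(x)‖)` would otherwise
push `f` below `f*`). Hence `F_k` is nonincreasing, and the indices with `F_k < H0/(3H1)` are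
exactly `k ≥ M`. There `η_k = θ/H0`, and summing the descent inequality over `M ≤ k < N` bounds
the smallest squared gradient by `2 H0 F_0 / (θ (N - M))`. For `k < M` the step is
`η_k = θ/(3 H1 F_k)`; the descent inequality divided by `F_k`, summed over `k < M`, together with
Cauchy–Schwarz `M² ≤ (∑ F_k)(∑ 1/F_k)` gives the other bound.
-/

open scoped RealInnerProductSpace

noncomputable section

open Finset

section Descent

variable {E : Type*} [NormedAddCommGroup E] [InnerProductSpace ℝ E] [CompleteSpace E]
  {f : E → ℝ} {f' : E → E}

theorem le_add_inner_add_of_norm_gradient_sub_le (hgrad : ∀ y, HasGradientAt f (f' y) y)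
    {x y : E} {L : ℝ}
    (hlip : ∀ t ∈ Set.Icc (0 : ℝ) 1, ‖f' (x + t • (y - x)) - f' x‖ ≤ L * (t * ‖y - x‖)) :
    f y ≤ f x + ⟪f' x, y - x⟫ + L / 2 * ‖y - x‖ ^ 2 := by
  set δ := y - x
  let h : ℝ → ℝ := fun t => f (x + t • δ) - t * ⟪f' x, δ⟫ - L / 2 * ‖δ‖ ^ 2 * t ^ 2
  have hderiv (t : ℝ) : HasDerivAt h (⟪f' (x + t • δ) - f' x, δ⟫ - L * ‖δ‖ ^ 2 * t) t := by
    have hline : HasDerivAt (fun t : ℝ => x + t • δ) δ t := by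
      simpa using ((hasDerivAt_id t).smul_const δ).const_add x
    refine ((((hgrad _).hasFDerivAt.comp_hasDerivAt t hline).sub
      ((hasDerivAt_id t).mul_const ⟪f' x, δ⟫)).sub
      ((hasDerivAt_pow 2 t).const_mul (L / 2 * ‖δ‖ ^ 2))).congr_deriv ?_
    simp only [InnerProductSpace.toDual_apply_apply, inner_sub_left]
    push_cast
    ring
  have hanti : AntitoneOn h (Set.Icc 0 1) := by
    refine antitoneOn_of_hasDerivWithinAt_nonpos (convex_Icc 0 1)
      (fun t _ => (hderiv t).continuousAt.continuousWithinAt)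
      (fun t _ => (hderiv t).hasDerivWithinAt) fun t ht => ?_
    rw [interior_Icc] at ht
    have hcs := real_inner_le_norm (f' (x + t • δ) - f' x) δ
    have hbound := mul_le_mul_of_nonneg_right (hlip t (Set.Ioo_subset_Icc_self ht)) (norm_nonneg δ)
    linarith
  have := hanti (Set.left_mem_Icc.2 zero_le_one) (Set.right_mem_Icc.2 zero_le_one) zero_le_one
  simp [h, δ] at this
  linarith

def IsH0H1Smooth (f : E → ℝ) (f' : E → E) (H0 H1 fstar : ℝ) : Prop :=
  ∀ y z : E, √H1 * ‖z - y‖ ≤ 1 → ‖f' z - f' y‖ ≤ (H0 + H1 * (f y - fstar)) * ‖z - y‖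

variable {H0 H1 fstar : ℝ}

theorem IsH0H1Smooth.apply_sub_smul_le (hsm : IsH0H1Smooth f f' H0 H1 fstar)
    (hgrad : ∀ y, HasGradientAt f (f' y) y) {x : E} {s : ℝ} (hs : 0 ≤ s)
    (hsL : s * (H0 + H1 * (f x - fstar)) ≤ 1) (hsH1 : √H1 * (s * ‖f' x‖) ≤ 1) :
    f (x - s • f' x) ≤ f x - s / 2 * ‖f' x‖ ^ 2 := by
  set L := H0 + H1 * (f x - fstar)
  have hstep : x - s • f' x - x = -(s • f' x) := by abel
  have hnorm : ‖x - s • f' x - x‖ = s * ‖f' x‖ := by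
    rw [hstep, norm_neg, norm_smul, Real.norm_of_nonneg hs]
  have hquad := le_add_inner_add_of_norm_gradient_sub_le hgrad (x := x) (y := x - s • f' x)
    (L := L) fun t ht => by
      have hseg : ‖x + t • (x - s • f' x - x) - x‖ = t * ‖x - s • f' x - x‖ := by
        rw [add_sub_cancel_left, norm_smul, Real.norm_of_nonneg ht.1]
      rw [← hseg]
      refine hsm x _ ?_
      rw [hseg, hnorm]
      calc √H1 * (t * (s * ‖f' x‖)) ≤ √H1 * (1 * (s * ‖f' x‖)) := by gcongr; exact ht.2
        _ ≤ 1 := by rwa [one_mul]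
  rw [hstep, inner_neg_right, real_inner_smul_right, real_inner_self_eq_norm_sq, norm_neg,
    norm_smul, Real.norm_of_nonneg hs] at hquad
  nlinarith [mul_le_mul_of_nonneg_right hsL (mul_nonneg hs (sq_nonneg ‖f' x‖))]

theorem IsH0H1Smooth.sqrt_mul_norm_le (hsm : IsH0H1Smooth f f' H0 H1 fstar)
    (hgrad : ∀ y, HasGradientAt f (f' y) y) (hH0 : 0 ≤ H0) (hH1 : 0 ≤ H1)
    (hlow : ∀ y, fstar ≤ f y) (p : E) :
    √H1 * ‖f' p‖ ≤ 2 * (H0 + H1 * (f p - fstar)) := by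
  have hF : 0 ≤ f p - fstar := sub_nonneg.2 (hlow p)
  by_contra! hbig
  have hpos : 0 < √H1 * ‖f' p‖ := lt_of_le_of_lt (by positivity) hbig
  set s := 1 / (√H1 * ‖f' p‖)
  have hdesc := hsm.apply_sub_smul_le hgrad (x := p) (s := s) (by positivity)
    (by rw [div_mul_eq_mul_div, one_mul, div_le_one hpos]; linarith)
    (by rw [mul_left_comm]; exact (one_div_mul_cancel hpos.ne').le)
  have hdec : s * ‖f' p‖ ^ 2 ≤ 2 * (f p - fstar) := by linarith [hlow (p - s • f' p)]
  have hsq : (√H1 * ‖f' p‖) * (√H1 * ‖f' p‖) ≤ (2 * H1 * (f p - fstar)) * (√H1 * ‖f' p‖) :=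
    calc (√H1 * ‖f' p‖) * (√H1 * ‖f' p‖) = H1 * (s * ‖f' p‖ ^ 2) * (√H1 * ‖f' p‖) := by
          rw [mul_mul_mul_comm, Real.mul_self_sqrt hH1]
          linear_combination (-(H1 * ‖f' p‖ ^ 2)) * (one_div_mul_cancel hpos.ne')
      _ ≤ H1 * (2 * (f p - fstar)) * (√H1 * ‖f' p‖) := by gcongr
      _ = (2 * H1 * (f p - fstar)) * (√H1 * ‖f' p‖) := by ring
  nlinarith [le_of_mul_le_mul_right hsq hpos]

def warmupStepSize (H0 H1 θ F : ℝ) : ℝ := θ / max H0 (3 * H1 * F)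

theorem IsH0H1Smooth.apply_sub_warmupStepSize_smul_le (hsm : IsH0H1Smooth f f' H0 H1 fstar)
    (hgrad : ∀ y, HasGradientAt f (f' y) y) (hH0 : 0 < H0) (hH1 : 0 ≤ H1)
    (hlow : ∀ y, fstar ≤ f y) {θ : ℝ} (hθ0 : 0 ≤ θ) (hθ : θ ≤ 3 / 8) (x : E) :
    f (x - warmupStepSize H0 H1 θ (f x - fstar) • f' x)
      ≤ f x - warmupStepSize H0 H1 θ (f x - fstar) / 2 * ‖f' x‖ ^ 2 := by
  have hF : 0 ≤ f x - fstar := sub_nonneg.2 (hlow x)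
  set L := H0 + H1 * (f x - fstar)
  set m := max H0 (3 * H1 * (f x - fstar))
  have hm : 0 < m := lt_max_of_lt_left hH0
  have hLm : 2 * θ * L ≤ m := by
    have := le_max_left H0 (3 * H1 * (f x - fstar))
    have := le_max_right H0 (3 * H1 * (f x - fstar))
    nlinarith [mul_nonneg hH1 hF]
  have hgrad_le := hsm.sqrt_mul_norm_le hgrad hH0.le hH1 hlow x
  apply hsm.apply_sub_smul_le hgrad (by unfold warmupStepSize; positivity)
  · rw [warmupStepSize, div_mul_eq_mul_div, div_le_one hm]
    nlinarith [mul_nonneg hH1 hF]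
  · rw [warmupStepSize, mul_left_comm, div_mul_eq_mul_div, div_le_one hm]
    nlinarith

end Descent

theorem Finset.exists_le_div_sum_of_sum_mul_le {ι : Type*} {s : Finset ι} (hs : s.Nonempty)
    {w g : ι → ℝ} {B : ℝ} (hw : ∀ i ∈ s, 0 < w i) (h : ∑ i ∈ s, w i * g i ≤ B) :
    ∃ i ∈ s, g i ≤ B / ∑ i ∈ s, w i := by
  have hW : 0 < ∑ i ∈ s, w i := sum_pos hw hs
  obtain ⟨i, hi, hle⟩ := exists_le_of_sum_le hs (f := fun i => w i * g i)
    (g := fun i => w i * (B / ∑ i ∈ s, w i)) (by rwa [← sum_mul, mul_div_cancel₀ _ hW.ne'])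
  exact ⟨i, hi, le_of_mul_le_mul_left hle (hw i hi)⟩

section Rate

variable {F G : ℕ → ℝ} {H0 H1 θ : ℝ}

theorem exists_le_div_sum_of_mul_le_sub {w : ℕ → ℝ} {a b : ℕ} (hab : a < b)
    (hw : ∀ k ∈ Ico a b, 0 < w k) (hstep : ∀ k ∈ Ico a b, w k * G k ≤ F k - F (k + 1)) :
    ∃ k ∈ Ico a b, G k ≤ (F a - F b) / ∑ k ∈ Ico a b, w k := by
  refine exists_le_div_sum_of_sum_mul_le (nonempty_Ico.2 hab) hw ?_
  calc ∑ k ∈ Ico a b, w k * G k ≤ ∑ k ∈ Ico a b, -(F (k + 1) - F k) :=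
        sum_le_sum fun k hk => by linarith [hstep k hk]
    _ = F a - F b := by rw [sum_neg_distrib, sum_Ico_sub F hab.le, neg_sub]

theorem antitone_of_warmup_descent (hθ : 0 ≤ θ) (hH0 : 0 < H0) (hG : ∀ k, 0 ≤ G k)
    (hdesc : ∀ k, warmupStepSize H0 H1 θ (F k) / 2 * G k ≤ F k - F (k + 1)) : Antitone F :=
  antitone_nat_of_succ_le fun k => by
    have : 0 ≤ warmupStepSize H0 H1 θ (F k) / 2 * G k := by
      have hm : 0 < max H0 (3 * H1 * F k) := lt_max_of_lt_left hH0
      have := hG k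
      unfold warmupStepSize
      positivity
    linarith [hdesc k]

theorem exists_le_of_warmup_descent_of_small_gap (hθ : 0 < θ) (hH0 : 0 < H0) (hH1 : 0 ≤ H1)
    (hF : ∀ k, 0 ≤ F k) (hanti : Antitone F)
    (hdesc : ∀ k, warmupStepSize H0 H1 θ (F k) / 2 * G k ≤ F k - F (k + 1))
    {a N : ℕ} (haN : a < N) (hsmall : 3 * H1 * F a ≤ H0) :
    ∃ k ∈ Ico a N, G k ≤ 2 * H0 * F 0 / (θ * (N - a)) := by
  have hstep : ∀ k ∈ Ico a N, θ / H0 / 2 * G k ≤ F k - F (k + 1) := fun k hk => by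
    have hk : 3 * H1 * F k ≤ H0 :=
      (mul_le_mul_of_nonneg_left (hanti (mem_Ico.1 hk).1) (by positivity)).trans hsmall
    simpa [warmupStepSize, max_eq_left hk] using hdesc k
  obtain ⟨k, hk, hle⟩ := exists_le_div_sum_of_mul_le_sub haN (fun _ _ => by positivity) hstep
  refine ⟨k, hk, hle.trans ?_⟩
  have hNa : (0 : ℝ) < N - a := sub_pos.2 (Nat.cast_lt.2 haN)
  rw [sum_const, Nat.card_Ico, nsmul_eq_mul, Nat.cast_sub haN.le,
    show 2 * H0 * F 0 / (θ * (N - a)) = F 0 / ((N - a) * (θ / H0 / 2)) by field_simp]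
  gcongr
  linarith [hF N, hanti (Nat.zero_le a)]

theorem exists_le_of_warmup_descent_of_large_gap (hθ : 0 < θ) (hH0 : 0 < H0) (hH1 : 0 < H1)
    (hF : ∀ k, 0 ≤ F k)
    (hdesc : ∀ k, warmupStepSize H0 H1 θ (F k) / 2 * G k ≤ F k - F (k + 1))
    {M : ℕ} (hM : 0 < M) (hlarge : ∀ k < M, H0 ≤ 3 * H1 * F k) :
    ∃ k < M, G k ≤ 6 * H1 * F 0 * (∑ j ∈ range M, F j) / (θ * M ^ 2) := by
  have hFpos : ∀ k < M, 0 < F k := fun k hk =>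
    pos_of_mul_pos_right (hH0.trans_le (hlarge k hk)) (by positivity)
  have hstep : ∀ k ∈ Ico 0 M, θ / (6 * H1 * F k) * G k ≤ F k - F (k + 1) := fun k hk => by
    have hk := (mem_Ico.1 hk).2
    have := hdesc k
    rw [warmupStepSize, max_eq_right (hlarge k hk), div_div,
      show 3 * H1 * F k * 2 = 6 * H1 * F k by ring] at this
    exact this
  obtain ⟨k, hk, hle⟩ := exists_le_div_sum_of_mul_le_sub hM
    (fun k hk => by have := hFpos k (mem_Ico.1 hk).2; positivity) hstep
  refine ⟨k, (mem_Ico.1 hk).2, hle.trans ?_⟩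
  rw [← range_eq_Ico]
  set S := ∑ j ∈ range M, F j
  set T := ∑ j ∈ range M, (F j)⁻¹
  have hFpos' : ∀ j ∈ range M, 0 < F j := fun j hj => hFpos j (mem_range.1 hj)
  have hT : 0 < T := sum_pos (fun j hj => inv_pos.2 (hFpos' j hj)) (nonempty_range_iff.2 hM.ne')
  have hW : ∑ j ∈ range M, θ / (6 * H1 * F j) = θ / (6 * H1) * T := by
    rw [mul_sum]
    exact sum_congr rfl fun j _ => by rw [← div_eq_mul_inv, div_div]
  have hCS : (M : ℝ) ^ 2 ≤ S * T := by
    simpa using sum_sq_le_sum_mul_sum_of_sq_le_mul (range M) (r := fun _ => (1 : ℝ))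
      (fun j hj => (hFpos' j hj).le) (fun j hj => (inv_pos.2 (hFpos' j hj)).le)
      (fun j hj => by rw [mul_inv_cancel₀ (hFpos' j hj).ne', one_pow])
  calc (F 0 - F M) / ∑ j ∈ range M, θ / (6 * H1 * F j) ≤ F 0 / (θ / (6 * H1) * T) := by
        rw [hW]
        gcongr
        linarith [hF M]
    _ ≤ 6 * H1 * F 0 * S / (θ * M ^ 2) := by
        rw [div_le_div_iff₀ (by positivity) (by positivity)]
        calc F 0 * (θ * M ^ 2) ≤ F 0 * (θ * (S * T)) := by gcongr; exact hF 0
          _ = 6 * H1 * F 0 * S * (θ / (6 * H1) * T) := by field_simp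

end Rate

theorem exists_le_min_of_exists_le {ι α : Type*} [LinearOrder α] {p : ι → Prop} {u : ι → α}
    {a b : α} (ha : ∃ i, p i ∧ u i ≤ a) (hb : ∃ i, p i ∧ u i ≤ b) :
    ∃ i, p i ∧ u i ≤ min a b := by
  obtain ⟨i, hi, hia⟩ := ha
  obtain ⟨j, hj, hjb⟩ := hb
  rcases le_total (u i) (u j) with h | h
  · exact ⟨i, hi, le_min hia (h.trans hjb)⟩
  · exact ⟨j, hj, le_min (h.trans hia) hjb⟩

theorem gd_warmup_nonconvex_rate_general
    {d : ℕ}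
    (f : EuclideanSpace ℝ (Fin d) → ℝ)
    (f' : EuclideanSpace ℝ (Fin d) → EuclideanSpace ℝ (Fin d))
    (H0 H1 θ : ℝ) (N M : ℕ)
    (x : ℕ → EuclideanSpace ℝ (Fin d))
    (hH0 : 0 < H0) (hH1 : 0 < H1)
    (hθ : θ = 1 / (4 * Real.sqrt 2 + 4))
    (hgrad : ∀ y, HasGradientAt f (f' y) y)
    (hbdd : BddBelow (Set.range f))
    (hsmooth : ∀ y z : EuclideanSpace ℝ (Fin d),
      Real.sqrt H1 * ‖z - y‖ ≤ 1 →
      ‖f' z - f' y‖ ≤ (H0 + H1 * (f y - ⨅ w, f w)) * ‖z - y‖)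
    -- GD with warm-up step size
    (hupdate : ∀ k, x (k + 1) =
      x k - (θ / max H0 (3 * H1 * (f (x k) - ⨅ w, f w))) • f' (x k))
    (hN : 0 < N)
    -- `M` is the smallest index `k < N` with `F_k < H0/(3H1)`, else `M = N`
    (hMbefore : ∀ k < M, H0 / (3 * H1) ≤ f (x k) - ⨅ w, f w)
    (hMat : M < N → f (x M) - ⨅ w, f w < H0 / (3 * H1)) :
    -- (i) `M = 0`
    (M = 0 → ∃ k < N, ‖f' (x k)‖ ≤
      Real.sqrt (2 * H0 * (f (x 0) - ⨅ w, f w) / (θ * N))) ∧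
    -- (ii) `1 ≤ M ≤ N - 1`
    (1 ≤ M → M < N → ∃ k < N, ‖f' (x k)‖ ≤
      min (Real.sqrt (6 * H1 * (f (x 0) - ⨅ w, f w) *
              (∑ j ∈ Finset.range M, (f (x j) - ⨅ w, f w)) / (θ * M ^ 2)))
          (Real.sqrt (2 * H0 * (f (x 0) - ⨅ w, f w) / (θ * ((N : ℝ) - M))))) ∧
    -- (iii) `M = N`
    (M = N → ∃ k < N, ‖f' (x k)‖ ≤
      Real.sqrt (6 * H1 * (f (x 0) - ⨅ w, f w) *
        (∑ j ∈ Finset.range N, (f (x j) - ⨅ w, f w)) / (θ * N ^ 2))) := by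
  have hlow : ∀ y, ⨅ w, f w ≤ f y := ciInf_le hbdd
  set F : ℕ → ℝ := fun k => f (x k) - ⨅ w, f w
  have hF (k : ℕ) : 0 ≤ F k := sub_nonneg.2 (hlow _)
  have hθ0 : 0 < θ := by rw [hθ]; positivity
  have hθ38 : θ ≤ 3 / 8 := by
    rw [hθ, div_le_iff₀ (by positivity)]
    nlinarith [Real.sqrt_nonneg 2]
  have hdesc (k : ℕ) : warmupStepSize H0 H1 θ (F k) / 2 * ‖f' (x k)‖ ^ 2 ≤ F k - F (k + 1) := by
    have := IsH0H1Smooth.apply_sub_warmupStepSize_smul_le hsmooth hgrad hH0 hH1.le hlow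
      hθ0.le hθ38 (x k)
    have hstep : x k - warmupStepSize H0 H1 θ (f (x k) - ⨅ w, f w) • f' (x k) = x (k + 1) :=
      (hupdate k).symm
    simp only [F]
    linarith [hstep ▸ this]
  have hanti := antitone_of_warmup_descent hθ0.le hH0 (fun _ => sq_nonneg _) hdesc
  have hwarm : ∀ k < M, H0 ≤ 3 * H1 * F k := fun k hk =>
    (div_le_iff₀' (by positivity)).1 (hMbefore k hk)
  have hcool (hMN : M < N) : 3 * H1 * F M ≤ H0 :=
    ((lt_div_iff₀' (by positivity)).1 (hMat hMN)).le
  refine ⟨fun hM => ?_, fun hM hMN => ?_, fun hMN => ?_⟩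
  · subst hM
    obtain ⟨k, hk, hle⟩ :=
      exists_le_of_warmup_descent_of_small_gap hθ0 hH0 hH1.le hF hanti hdesc hN (hcool hN)
    exact ⟨k, (mem_Ico.1 hk).2, Real.le_sqrt_of_sq_le (by simpa using hle)⟩
  · refine exists_le_min_of_exists_le ?_ ?_
    · obtain ⟨k, hk, hle⟩ :=
        exists_le_of_warmup_descent_of_large_gap hθ0 hH0 hH1 hF hdesc hM hwarm
      exact ⟨k, hk.trans hMN, Real.le_sqrt_of_sq_le hle⟩
    · obtain ⟨k, hk, hle⟩ :=
        exists_le_of_warmup_descent_of_small_gap hθ0 hH0 hH1.le hF hanti hdesc hMN (hcool hMN)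
      exact ⟨k, (mem_Ico.1 hk).2, Real.le_sqrt_of_sq_le hle⟩
  · subst hMN
    obtain ⟨k, hk, hle⟩ :=
      exists_le_of_warmup_descent_of_large_gap hθ0 hH0 hH1 hF hdesc hN hwarm
    exact ⟨k, hk, Real.le_sqrt_of_sq_le hle⟩

/-- Non-convex rate for GD with warm-up step size on an
`(H0,H1)`-smooth function (`H0, H1 > 0`, bounded below), with
`θ = 1/(4√2 + 4)` and `η_k = θ / max{H0, 3H1 F_k}` (which encodes
`θ·min{1/H0, 1/(3H1 F_k)}` together with the convention `η_k = θ/H0` when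
`F_k = 0`). `M` is the smallest index `k ∈ {0,…,N-1}` with `F_k < H0/(3H1)`,
and `M = N` if no such index exists. -/
theorem gd_warmup_nonconvex_rate
    {d : ℕ}
    (f : EuclideanSpace ℝ (Fin d) → ℝ)
    (f' : EuclideanSpace ℝ (Fin d) → EuclideanSpace ℝ (Fin d))
    (H0 H1 θ : ℝ) (N M : ℕ)
    (x : ℕ → EuclideanSpace ℝ (Fin d))
    (hH0 : 0 < H0) (hH1 : 0 < H1)
    (hθ : θ = 1 / (4 * Real.sqrt 2 + 4))
    (hgrad : ∀ y, HasGradientAt f (f' y) y)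
    (hbdd : BddBelow (Set.range f))
    (hsmooth : ∀ y z : EuclideanSpace ℝ (Fin d),
      Real.sqrt H1 * ‖z - y‖ ≤ 1 →
      ‖f' z - f' y‖ ≤ (H0 + H1 * (f y - ⨅ w, f w)) * ‖z - y‖)
    -- GD with warm-up step size
    (hupdate : ∀ k, x (k + 1) =
      x k - (θ / max H0 (3 * H1 * (f (x k) - ⨅ w, f w))) • f' (x k))
    (hN : 0 < N)
    -- `M` is the smallest index `k < N` with `F_k < H0/(3H1)`, else `M = N`
    (hMle : M ≤ N)
    (hMbefore : ∀ k < M, H0 / (3 * H1) ≤ f (x k) - ⨅ w, f w)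
    (hMat : M < N → f (x M) - ⨅ w, f w < H0 / (3 * H1)) :
    -- (i) `M = 0`
    (M = 0 → ∃ k < N, ‖f' (x k)‖ ≤
      Real.sqrt (2 * H0 * (f (x 0) - ⨅ w, f w) / (θ * N))) ∧
    -- (ii) `1 ≤ M ≤ N - 1`
    (1 ≤ M → M < N → ∃ k < N, ‖f' (x k)‖ ≤
      min (Real.sqrt (6 * H1 * (f (x 0) - ⨅ w, f w) *
              (∑ j ∈ Finset.range M, (f (x j) - ⨅ w, f w)) / (θ * M ^ 2)))
          (Real.sqrt (2 * H0 * (f (x 0) - ⨅ w, f w) / (θ * ((N : ℝ) - M))))) ∧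
    -- (iii) `M = N`
    (M = N → ∃ k < N, ‖f' (x k)‖ ≤
      Real.sqrt (6 * H1 * (f (x 0) - ⨅ w, f w) *
        (∑ j ∈ Finset.range N, (f (x j) - ⨅ w, f w)) / (θ * N ^ 2))) :=
  gd_warmup_nonconvex_rate_general f f' H0 H1 θ N M x hH0 hH1 hθ hgrad hbdd hsmooth hupdate hN
    hMbefore hMat

end
end

section
/- Let X be a nonnegative real-valued random variable on a probability space with E[X] and E[X²] finite, let I be the indicator of a measurable event, and let a, b > 0. Then a·E[X·I] + b·E[X²·(1 − I)] ≥ min{ (a/2)·E[X] , b·(E[X])² }. -/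
/-!
Write `m = E[X]` and `t = E[X (1 - I)]`, so that `E[X I] = m - t` with `t ≤ m`. Jensen's inequality
for the variable `X (1 - I)` gives `t² ≤ E[X² (1 - I)]`, which reduces the claim to the scalar
inequality `min (a m / 2) (b m²) ≤ a (m - t) + b t²`: when `a ≤ 2 b m` the right side stays
above `a m / 2`, and otherwise it decreases in `t` on `(-∞, m]` down to its value `b m²` at `t = m`.
-/

open MeasureTheory ProbabilityTheory

theorem min_le_mul_sub_add_mul_sq {a b m t : ℝ} (ha : 0 ≤ a) (hb : 0 ≤ b) (htm : t ≤ m) :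
    min (a / 2 * m) (b * m ^ 2) ≤ a * (m - t) + b * t ^ 2 := by
  rcases le_or_gt a (2 * b * m) with h | h
  · refine (min_le_left _ _).trans ?_
    rcases le_or_gt t (m / 2) with ht | ht
    · nlinarith [mul_nonneg hb (sq_nonneg t)]
    · nlinarith [mul_le_mul_of_nonneg_right h (sub_nonneg.2 ht.le),
        mul_nonneg hb (sq_nonneg (t - m))]
  · refine (min_le_right _ _).trans ?_
    nlinarith [mul_nonneg (sub_nonneg.2 htm) (sub_nonneg.2 h.le),
      mul_nonneg hb (sq_nonneg (m - t))]

theorem sq_integral_le_integral_sq {Ω : Type*} [MeasurableSpace Ω] {μ : Measure Ω}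
    [IsProbabilityMeasure μ] {f : Ω → ℝ} (hf : MemLp f 2 μ) :
    (∫ ω, f ω ∂μ) ^ 2 ≤ ∫ ω, f ω ^ 2 ∂μ := by
  have h := variance_nonneg f μ
  rw [variance_eq_sub hf] at h
  simpa only [Pi.pow_apply, sub_nonneg] using h

/-- For a nonnegative random variable `X` with `E[X]` and
`E[X²]` finite, an indicator `I` of a measurable event, and `a, b > 0`,
`a·E[X·I] + b·E[X²·(1 - I)] ≥ min{(a/2)·E[X], b·(E[X])²}`. -/
theorem indicator_split_min_inequality
    {Ω : Type*} [MeasurableSpace Ω]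
    (μ : Measure Ω) [IsProbabilityMeasure μ]
    (X : Ω → ℝ) (A : Set Ω) (a b : ℝ)
    (hA : MeasurableSet A)
    (ha : 0 < a) (hb : 0 < b)
    (hX0 : ∀ ω, 0 ≤ X ω)
    (hX1 : Integrable X μ)
    (hX2 : Integrable (fun ω => X ω ^ 2) μ) :
    min (a / 2 * ∫ ω, X ω ∂μ) (b * (∫ ω, X ω ∂μ) ^ 2) ≤
      a * ∫ ω, X ω * A.indicator (fun _ => (1 : ℝ)) ω ∂μ +
        b * ∫ ω, X ω ^ 2 * (1 - A.indicator (fun _ => (1 : ℝ)) ω) ∂μ := by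
  have hX : MemLp X 2 μ := (memLp_two_iff_integrable_sq hX1.aestronglyMeasurable).2 hX2
  have h_on_A : ∫ ω, X ω * A.indicator (fun _ => (1 : ℝ)) ω ∂μ =
      (∫ ω, X ω ∂μ) - ∫ ω, Aᶜ.indicator X ω ∂μ := by
    rw [eq_sub_iff_add_eq, ← integral_add_compl hA hX1, ← integral_indicator hA,
      ← integral_indicator hA.compl]
    congr 2 with ω
    by_cases h : ω ∈ A <;> simp [h]
  have h_off_A : (∫ ω, Aᶜ.indicator X ω ∂μ) ^ 2 ≤
      ∫ ω, X ω ^ 2 * (1 - A.indicator (fun _ => (1 : ℝ)) ω) ∂μ := by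
    refine (sq_integral_le_integral_sq (hX.indicator hA.compl)).trans_eq
      (integral_congr_ae (Filter.Eventually.of_forall fun ω => ?_))
    by_cases h : ω ∈ A <;> simp [h]
  have h_le : ∫ ω, Aᶜ.indicator X ω ∂μ ≤ ∫ ω, X ω ∂μ :=
    integral_mono (hX1.indicator hA.compl) hX1 (Set.indicator_le_self' fun ω _ => hX0 ω)
  rw [h_on_A]
  exact (min_le_mul_sub_add_mul_sq ha.le hb.le h_le).trans (by gcongr)
end
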